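/- arXiv:1310.6512 — 5 statements merged into one kernel-verified Lean document; each statement's English description precedes it below -/
import Mathlib

section
/- Let E be an oriented n-dimensional real inner product space, 0 < k < n−1, and let {v_1, …, v_k, ω_1, …, ω_{n−k}} be a basis of E. For a ∈ {1, …, n−k}, define u_a = ⋆( (⋀_{i≠a} ω_i) ∧ v_1 ∧ ⋯ ∧ v_k ). Then the vectors u_1, …, u_{n−k} are linearly independent. -/
/-! Pairing a relation `∑ c_t u_t = 0` with `ω_a` through the defining property
`⟨⋆ν, ω⟩ μ = ν ∧ ω` of the Hodge star gives `∑ c_t ν_t ∧ ω_a = 0`, where `ν_t` is the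
`(n-1)`-vector defining `u_t`. For `t ≠ a` the factor `ω_a` already occurs in `ν_t`, so only
`c_a ν_a ∧ ω_a` survives, and `ν_a ∧ ω_a` is the wedge of a reordering of the basis, hence
nonzero. -/

noncomputable section

open ExteriorAlgebra Module

/-- The data of the induced inner products on the exterior powers of an oriented
`n`-dimensional real inner product space `E`, together with the Hodge star operators,
characterized by their defining properties. -/
structure HodgeData (E : Type*) [NormedAddCommGroup E] [InnerProductSpace ℝ E] (n : ℕ) where
  /-- an orthonormal basis fixing the orientation -/
  e : OrthonormalBasis (Fin n) ℝ E
  /-- the induced inner product on the exterior algebra (degreewise, the inner product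
  `⟨·,·⟩_p` on `Λ^p E`) -/
  B : ExteriorAlgebra ℝ E →ₗ[ℝ] ExteriorAlgebra ℝ E →ₗ[ℝ] ℝ
  B_symm : ∀ x y, B x y = B y x
  /-- on decomposable `p`-vectors, the inner product is the Gram determinant -/
  B_gram : ∀ (p : ℕ) (v w : Fin p → E),
    B (ExteriorAlgebra.ιMulti ℝ p v) (ExteriorAlgebra.ιMulti ℝ p w)
      = (Matrix.of fun i j => (inner ℝ (v i) (w j) : ℝ)).det
  /-- the Hodge star operator `⋆ : Λ^p E → Λ^{n-p} E` (for each `p`) -/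
  star : ℕ → ExteriorAlgebra ℝ E →ₗ[ℝ] ExteriorAlgebra ℝ E
  star_mem : ∀ (p : ℕ) (ν : ExteriorAlgebra ℝ E), ν ∈ ⋀[ℝ]^p E →
    star p ν ∈ ⋀[ℝ]^(n - p) E
  /-- the defining property of the Hodge star: `⟨⋆ν, ω⟩ μ = ν ∧ ω` where
  `μ = e_1 ∧ ⋯ ∧ e_n` is the unit volume element -/
  star_eq : ∀ (p : ℕ) (ν ω : ExteriorAlgebra ℝ E), ν ∈ ⋀[ℝ]^p E → ω ∈ ⋀[ℝ]^(n - p) E →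
    (B (star p ν) ω) • (ExteriorAlgebra.ιMulti ℝ n ⇑e) = ν * ω

namespace HodgeData

variable {E : Type*} [NormedAddCommGroup E] [InnerProductSpace ℝ E] {n : ℕ}

/-- the unit volume element `μ = e_1 ∧ ⋯ ∧ e_n` -/
def vol (H : HodgeData E n) : ExteriorAlgebra ℝ E := ExteriorAlgebra.ιMulti ℝ n ⇑H.e

/-- the norm on the exterior powers induced by the inner product -/
def norm (H : HodgeData E n) (x : ExteriorAlgebra ℝ E) : ℝ := Real.sqrt (H.B x x)

end HodgeData

theorem Fin.range_append {α : Type*} {m n : ℕ} (a : Fin m → α) (b : Fin n → α) :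
    Set.range (Fin.append a b) = Set.range a ∪ Set.range b := by
  ext x
  constructor
  · rintro ⟨i, rfl⟩
    induction i using Fin.addCases <;> simp
  · rintro (⟨i, rfl⟩ | ⟨i, rfl⟩)
    exacts [⟨Fin.castAdd n i, Fin.append_left a b i⟩, ⟨Fin.natAdd m i, Fin.append_right a b i⟩]

theorem Fin.range_snoc_append_succAbove {α : Type*} {m n : ℕ} (a : Fin n → α)
    (b : Fin (m + 1) → α) (j : Fin (m + 1)) :
    Set.range (Fin.snoc (Fin.append (b ∘ j.succAbove) a) (b j) : Fin (m + n + 1) → α) =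
      Set.range (Fin.append a b) := by
  rw [Fin.range_snoc, Fin.range_append, Fin.range_append, Set.range_comp, Fin.range_succAbove,
    Set.union_comm, ← Set.union_insert, ← Set.image_insert_eq, Set.insert_eq, Set.union_compl_self,
    Set.image_univ]

theorem LinearIndependent.of_range_eq_of_card_eq {K M ι ι' : Type*} [DivisionRing K]
    [AddCommGroup M] [Module K M] [Fintype ι] [Fintype ι'] {b : ι → M} {b' : ι' → M}
    (hb : LinearIndependent K b) (hrange : Set.range b' = Set.range b)
    (hcard : Fintype.card ι' = Fintype.card ι) : LinearIndependent K b' := by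
  rw [linearIndependent_iff_card_eq_finrank_span] at hb ⊢
  rw [hrange, hcard, hb]

theorem ExteriorAlgebra.ιMulti_ne_zero_of_linearIndependent {K M : Type*} [Field K]
    [AddCommGroup M] [Module K M] {n : ℕ} {v : Fin n → M} (hv : LinearIndependent K v) :
    ιMulti K n v ≠ 0 := by
  -- the wedge of the unique `n`-subset of `Fin n` in the independent family of `n`-fold wedges
  have h := (exteriorPower.ιMulti_family_linearIndependent_field (n := n) hv).ne_zero
    (Set.powersetCard.ofFinEmbEquiv (RelEmbedding.refl _))
  rw [exteriorPower.ιMulti_family, Equiv.symm_apply_apply] at h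
  exact fun h0 => h (Subtype.ext h0)

theorem ExteriorAlgebra.ιMulti_snoc {R M : Type*} [CommRing R] [AddCommGroup M] [Module R M]
    {n : ℕ} (f : Fin n → M) (x : M) :
    ιMulti R (n + 1) (Fin.snoc f x) = ιMulti R n f * ι R x := by
  rw [ιMulti_apply, ιMulti_apply, List.ofFn_succ', List.concat_eq_append, List.prod_append]
  simp [Fin.snoc_castSucc, Fin.snoc_last]

theorem ExteriorAlgebra.ιMulti_snoc_eq_zero_of_mem_range {R M : Type*} [CommRing R]
    [AddCommGroup M] [Module R M] {n : ℕ} {f : Fin n → M} {x : M} (hx : x ∈ Set.range f) :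
    ιMulti R (n + 1) (Fin.snoc f x) = 0 :=
  ιMulti_eq_zero_of_not_inj fun h => (Fin.snoc_injective_iff.mp h).2 hx

theorem ExteriorAlgebra.ι_mem_exteriorPower_one {R M : Type*} [CommRing R] [AddCommGroup M]
    [Module R M] (x : M) : ι R x ∈ ⋀[R]^1 M := by
  rw [exteriorPower, pow_one]
  exact LinearMap.mem_range_self _ x

namespace HodgeData

variable {E : Type*} [NormedAddCommGroup E] [InnerProductSpace ℝ E] {n : ℕ}

theorem mul_ι_eq_zero_of_star_eq_zero (H : HodgeData E n) {p : ℕ} (hp : p + 1 = n)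
    {ν : ExteriorAlgebra ℝ E} (hν : ν ∈ ⋀[ℝ]^p E) (hstar : H.star p ν = 0) (x : E) :
    ν * ι ℝ x = 0 := by
  have hx : ι ℝ x ∈ ⋀[ℝ]^(n - p) E := by
    rw [← hp, Nat.add_sub_cancel_left]
    exact ι_mem_exteriorPower_one x
  rw [← H.star_eq p ν _ hν hx, hstar, map_zero, LinearMap.zero_apply, zero_smul]

end HodgeData

theorem stmt5_general {E : Type*} [NormedAddCommGroup E] [InnerProductSpace ℝ E] (k m : ℕ)
    (H : HodgeData E (k + (m + 2)))
    (v : Fin k → E) (ω : Fin (m + 2) → E)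
    (hindep : LinearIndependent ℝ (Fin.append v ω))
    (u : Fin (m + 2) → E)
    (hu : ∀ a, ExteriorAlgebra.ι ℝ (u a)
      = H.star (m + 1 + k) (ExteriorAlgebra.ιMulti ℝ (m + 1 + k)
          (Fin.append (fun i => ω (a.succAbove i)) v))) :
    LinearIndependent ℝ u := by
  rw [Fintype.linearIndependent_iff]
  intro c hc a
  set f : Fin (m + 2) → Fin (m + 1 + k) → E := fun t => Fin.append (fun i => ω (t.succAbove i)) v
  set ν := ∑ t, c t • ιMulti ℝ (m + 1 + k) (f t)
  have hν : ν ∈ ⋀[ℝ]^(m + 1 + k) E :=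
    Submodule.sum_mem _ fun t _ => Submodule.smul_mem _ _ (ιMulti_range ℝ _ ⟨f t, rfl⟩)
  have hstar : H.star (m + 1 + k) ν = 0 := by
    rw [← map_zero (ι ℝ), ← hc]
    simp only [ν, f, map_sum, map_smul, hu]
  have hwedge : ∑ t, c t • ιMulti ℝ (m + 1 + k + 1) (Fin.snoc (f t) (ω a)) = 0 := by
    simpa only [ν, ιMulti_snoc, smul_mul_assoc, Finset.sum_mul] using
      H.mul_ι_eq_zero_of_star_eq_zero (by omega) hν hstar (ω a)
  have hrepeat : ∀ t ≠ a, ω a ∈ Set.range (f t) := fun t hta =>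
    let ⟨i, hi⟩ := Fin.exists_succAbove_eq hta.symm
    ⟨Fin.castAdd k i, by simp [f, hi]⟩
  rw [Fintype.sum_eq_single a fun t hta => by
    rw [ιMulti_snoc_eq_zero_of_mem_range (hrepeat t hta), smul_zero]] at hwedge
  refine (smul_eq_zero.mp hwedge).resolve_right (ιMulti_ne_zero_of_linearIndependent ?_)
  exact hindep.of_range_eq_of_card_eq (Fin.range_snoc_append_succAbove v ω a)
    (by simp only [Fintype.card_fin]; omega)

/-- The vectors u_a = ⋆((⋀_{i≠a} ω_i) ∧ v_1 ∧ ⋯ ∧ v_k), a = 1,…,n−k, are linearly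
independent (here n = k + (m+2), so 0 < k < n − 1). -/
theorem stmt5 {E : Type*} [NormedAddCommGroup E] [InnerProductSpace ℝ E] (k m : ℕ)
    (hk : 0 < k) (H : HodgeData E (k + (m + 2)))
    (v : Fin k → E) (ω : Fin (m + 2) → E)
    (hindep : LinearIndependent ℝ (Fin.append v ω))
    (hspan : Submodule.span ℝ (Set.range (Fin.append v ω)) = ⊤)
    (u : Fin (m + 2) → E)
    (hu : ∀ a, ExteriorAlgebra.ι ℝ (u a)
      = H.star (m + 1 + k) (ExteriorAlgebra.ιMulti ℝ (m + 1 + k)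
          (Fin.append (fun i => ω (a.succAbove i)) v))) :
    LinearIndependent ℝ u :=
  stmt5_general k m H v ω hindep u hu
end
end

section
/- Let E be an oriented n-dimensional real inner product space, k > 0, p > 1, k + p < n − 1, and {v_1, …, v_k, w_1, …, w_p} linearly independent. For each i ∈ {1,…,p} and each b ∈ {1,…,k}, the vector Θ_i = ⋆[ (⋀_{j≠i} w_j) ∧ (⋀_{l=1}^k v_l) ∧ ⋆( (⋀_{j=1}^p w_j) ∧ (⋀_{l=1}^k v_l) ) ] satisfies ⟨Θ_i, v_b⟩ = 0. -/
noncomputable section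

open ExteriorAlgebra Module

/-!
Pairing with `v_b` turns `⟨⋆ν, v_b⟩ μ` into `ν ∧ v_b`, where
`ν = (⋀_{j≠i} w_j) ∧ (⋀_l v_l) ∧ ⋆W`. Moving `v_b` past the homogeneous form `⋆W` only costs a
sign, after which it meets the factor `v_b` already present in `ν`, so `ν ∧ v_b = 0`.
Since `⟨μ, μ⟩ = 1`, the volume element is nonzero and the pairing vanishes.
-/

namespace ExteriorAlgebra

variable {R M : Type*} [CommRing R] [AddCommGroup M] [Module R M]

theorem ι_mem_exteriorPower_one_s11 (y : M) : ι R y ∈ ⋀[R]^1 M := by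
  rw [exteriorPower, pow_one]
  exact LinearMap.mem_range_self _ y

theorem ι_mul_prod_map_ι (l : List M) (y : M) :
    ι R y * (l.map (ι R)).prod = (-1 : R) ^ l.length • ((l.map (ι R)).prod * ι R y) := by
  induction l with
  | nil => simp
  | cons a l ih =>
    have anticomm : ι R y * ι R a = -(ι R a * ι R y) :=
      eq_neg_of_add_eq_zero_left (ι_add_mul_swap y a)
    simp only [List.map_cons, List.prod_cons, List.length_cons]
    rw [← mul_assoc, anticomm, neg_mul, mul_assoc, ih, mul_smul_comm, pow_succ, mul_smul,
      neg_one_smul, mul_assoc, smul_neg]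

theorem ι_mul_eq_neg_one_pow_smul_mul_ι {m : ℕ} {x : ExteriorAlgebra R M}
    (hx : x ∈ ⋀[R]^m M) (y : M) : ι R y * x = (-1 : R) ^ m • (x * ι R y) := by
  rw [← ιMulti_span_fixedDegree] at hx
  induction hx using Submodule.span_induction with
  | mem z hz =>
    obtain ⟨f, rfl⟩ := hz
    simpa [ιMulti_apply, List.map_ofFn, Function.comp_def] using
      ι_mul_prod_map_ι (List.ofFn f) y
  | zero => simp
  | add a b _ _ iha ihb => rw [mul_add, iha, ihb, add_mul, smul_add]
  | smul c a _ iha => rw [mul_smul_comm, iha, smul_comm, smul_mul_assoc]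

theorem mul_mul_ι_eq_zero {m : ℕ} {a x : ExteriorAlgebra R M} (hx : x ∈ ⋀[R]^m M) {y : M}
    (ha : a * ι R y = 0) : a * x * ι R y = 0 := by
  have swap : x * ι R y = (-1 : R) ^ m • (ι R y * x) := by
    rw [ι_mul_eq_neg_one_pow_smul_mul_ι hx, smul_smul, ← pow_add,
      Even.neg_one_pow (Even.add_self m), one_smul]
  rw [mul_assoc, swap, mul_smul_comm, ← mul_assoc, ha, zero_mul, smul_zero]

theorem ιMulti_mul_ι_eq_zero {p : ℕ} (u : Fin p → M) (j : Fin p) :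
    ιMulti R p u * ι R (u j) = 0 := by
  have hι : ι R (u j) = ιMulti R 1 ![u j] := by simp
  rw [hι, ιMulti_mul_ιMulti]
  exact (ιMulti R (p + 1)).map_eq_zero_of_eq _ (i := Fin.castAdd 1 j) (j := Fin.natAdd p 0)
    (by simp) (Fin.ne_of_val_ne (by simp; omega))

end ExteriorAlgebra

namespace HodgeData

variable {E : Type*} [NormedAddCommGroup E] [InnerProductSpace ℝ E] {n : ℕ}

theorem B_vol_vol (H : HodgeData E n) : H.B H.vol H.vol = 1 := by
  have gram_eq_one : (Matrix.of fun i j => (inner ℝ (H.e i) (H.e j) : ℝ)) = 1 := by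
    ext i j
    simpa [Matrix.one_apply] using orthonormal_iff_ite.mp H.e.orthonormal i j
  rw [vol, H.B_gram, gram_eq_one, Matrix.det_one]

theorem vol_ne_zero (H : HodgeData E n) : H.vol ≠ 0 := by
  intro h
  simpa [h] using H.B_vol_vol

theorem B_star_eq_zero_of_mul_eq_zero (H : HodgeData E n) {p : ℕ} {ν ω : ExteriorAlgebra ℝ E}
    (hν : ν ∈ ⋀[ℝ]^p E) (hω : ω ∈ ⋀[ℝ]^(n - p) E) (h : ν * ω = 0) :
    H.B (H.star p ν) ω = 0 := by
  have := H.star_eq p ν ω hν hω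
  rw [h] at this
  exact (smul_eq_zero.mp this).resolve_right H.vol_ne_zero

end HodgeData

theorem stmt11_general {E : Type*} [NormedAddCommGroup E] [InnerProductSpace ℝ E] (n k q : ℕ)
    (hn : k + q + 3 < n) (H : HodgeData E n)
    (v : Fin k → E) (w : Fin (q + 2) → E)
    (W : ExteriorAlgebra ℝ E)
    (hW : W = ExteriorAlgebra.ιMulti ℝ (q + 2 + k) (Fin.append w v))
    (Θ : Fin (q + 2) → ExteriorAlgebra ℝ E)
    (hΘ : ∀ i, Θ i = H.star (n - 1)
      (ExteriorAlgebra.ιMulti ℝ (q + 1 + k)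
          (Fin.append (fun j => w (i.succAbove j)) v) * H.star (q + 2 + k) W)) :
    ∀ i b, H.B (Θ i) (ExteriorAlgebra.ι ℝ (v b)) = 0 := by
  intro i b
  set A := ιMulti ℝ (q + 1 + k) (Fin.append (fun j => w (i.succAbove j)) v)
  have hA : A ∈ ⋀[ℝ]^(q + 1 + k) E := ιMulti_range ℝ _ ⟨_, rfl⟩
  have hstarW : H.star (q + 2 + k) W ∈ ⋀[ℝ]^(n - (q + 2 + k)) E :=
    H.star_mem _ _ (hW ▸ ιMulti_range ℝ _ ⟨_, rfl⟩)
  have hν : A * H.star (q + 2 + k) W ∈ ⋀[ℝ]^(n - 1) E := by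
    convert SetLike.mul_mem_graded hA hstarW using 2
    omega
  have hvb : ι ℝ (v b) ∈ ⋀[ℝ]^(n - (n - 1)) E := by
    rw [show n - (n - 1) = 1 by omega]
    exact ι_mem_exteriorPower_one_s11 _
  have hAvb : A * ι ℝ (v b) = 0 := by
    simpa only [Fin.append_right] using
      ιMulti_mul_ι_eq_zero (R := ℝ) (Fin.append (fun j => w (i.succAbove j)) v)
        (Fin.natAdd (q + 1) b)
  rw [hΘ i]
  exact H.B_star_eq_zero_of_mul_eq_zero hν hvb (mul_mul_ι_eq_zero hstarW hAvb)

/-- ⟨Θ_i, v_b⟩ = 0 for every i and b. -/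
theorem stmt11 {E : Type*} [NormedAddCommGroup E] [InnerProductSpace ℝ E] (n k q : ℕ)
    (hk : 0 < k) (hn : k + q + 3 < n) (H : HodgeData E n)
    (v : Fin k → E) (w : Fin (q + 2) → E)
    (hindep : LinearIndependent ℝ (Fin.append v w))
    (W : ExteriorAlgebra ℝ E)
    (hW : W = ExteriorAlgebra.ιMulti ℝ (q + 2 + k) (Fin.append w v))
    (Θ : Fin (q + 2) → ExteriorAlgebra ℝ E)
    (hΘ : ∀ i, Θ i = H.star (n - 1)
      (ExteriorAlgebra.ιMulti ℝ (q + 1 + k)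
          (Fin.append (fun j => w (i.succAbove j)) v) * H.star (q + 2 + k) W)) :
    ∀ i b, H.B (Θ i) (ExteriorAlgebra.ι ℝ (v b)) = 0 :=
  stmt11_general n k q hn H v w W hW Θ hΘ
end
end

section
/- Let E be an oriented n-dimensional real inner product space, k + p = n with k > 0, p > 0, let λ_1, …, λ_p be real numbers, and let {v_1, …, v_k, w_1, …, w_p} be a basis of E. Then the system ⟨u, v_1⟩ = ⋯ = ⟨u, v_k⟩ = 0, ⟨u, w_i⟩ = λ_i (1 ≤ i ≤ p) has a unique solution, namely u_0 = ‖(⋀_{i=1}^p w_i) ∧ (⋀_{j=1}^k v_j)‖_n^{−2} Σ_{i=1}^p (−1)^{n−i} λ_i Θ_i, where Θ_i = ⋆[ (⋀_{j≠i} w_j) ∧ (⋀_{l=1}^k v_l) ∧ ⋆( (⋀_{j=1}^p w_j) ∧ (⋀_{l=1}^k v_l) ) ]. -/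
noncomputable section

open ExteriorAlgebra Module

/-!
`⋆W` has degree `0`, so it is a scalar `c` with `W = c μ`; `c ≠ 0` because `‖W‖² = c²` is the
Gram determinant of the basis. Let `νᵢ = (⋀_{j ≠ i} w_j) ∧ (⋀ v)`. Since `νᵢ ∧ ⋆W = c νᵢ` has
codegree one, `Θᵢ = ⋆(c νᵢ)` is a vector `θᵢ`, and `⟨θᵢ, x⟩ μ = c (νᵢ ∧ x)`. This vanishes when `x`
is some `v_j` or some `w_m` with `m ≠ i` (a factor repeats), and for `x = wᵢ` moving `wᵢ` back
into place gives `±c² μ`, with exactly the sign used in the formula. Hence `u₀` solves the system,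
and the solution is unique because the `w_i, v_j` span `E`.
-/

open scoped InnerProductSpace

namespace ExteriorAlgebra

variable {R M : Type*} [CommRing R] [AddCommGroup M] [Module R M]

theorem ι_mul_ι_eq_neg (x y : M) : ι R x * ι R y = -(ι R y * ι R x) :=
  eq_neg_of_add_eq_zero_left (ι_add_mul_swap x y)

theorem ιMulti_mul_ι {m : ℕ} (f : Fin m → M) (x : M) :
    ιMulti R m f * ι R x = (-1 : R) ^ m • (ι R x * ιMulti R m f) := by
  induction m with
  | zero => simp
  | succ m ih =>
    rw [ιMulti_succ_apply, mul_assoc, ih, mul_smul_comm, ← mul_assoc, ι_mul_ι_eq_neg,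
      neg_mul, mul_assoc, smul_neg, ← neg_smul, pow_succ, mul_neg_one, ← ιMulti_succ_apply]

theorem ιMulti_mul_ι_self {m : ℕ} (f : Fin m → M) (j : Fin m) :
    ιMulti R m f * ι R (f j) = 0 := by
  rw [ιMulti_mul_ι, ιMulti_apply, ι_mul_prod_list, smul_zero]

theorem ιMulti_succAbove_mul_ι {m : ℕ} (f : Fin (m + 1) → M) (i : Fin (m + 1)) :
    ιMulti R m (fun j => f (i.succAbove j)) * ι R (f i) =
      (-1 : R) ^ (m - i) • ιMulti R (m + 1) f := by
  induction m with
  | zero => simp [Fin.fin_one_eq_zero i, Matrix.vecTail]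
  | succ m ih =>
    induction i using Fin.cases with
    | zero =>
      simp_rw [Fin.succAbove_zero]
      rw [ιMulti_mul_ι, ιMulti_succ_apply f]
      rfl
    | succ i =>
      rw [ιMulti_succ_apply, ιMulti_succ_apply f, mul_assoc, Fin.val_succ, Nat.add_sub_add_right,
        ← mul_smul_comm, ← ih (Matrix.vecTail f) i]
      simp only [Matrix.vecTail, Function.comp_def, Fin.succ_succAbove_succ,
        Fin.succ_succAbove_zero]

theorem ιMulti_append_succAbove_mul_ι {p k : ℕ} (f : Fin (p + 1) → M) (g : Fin k → M)
    (i : Fin (p + 1)) :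
    ιMulti R (p + k) (Fin.append (fun j => f (i.succAbove j)) g) * ι R (f i) =
      (-1 : R) ^ (k + (p - i)) • ιMulti R (p + 1 + k) (Fin.append f g) := by
  rw [← ιMulti_mul_ιMulti, mul_assoc, ιMulti_mul_ι, mul_smul_comm, ← mul_assoc,
    ιMulti_succAbove_mul_ι, smul_mul_assoc, smul_smul, ← pow_add, ιMulti_mul_ιMulti]

theorem ιMulti_append_succAbove_mul_ι_of_ne {p k : ℕ} (f : Fin (p + 1) → M) (g : Fin k → M)
    {i m : Fin (p + 1)} (hm : m ≠ i) :
    ιMulti R (p + k) (Fin.append (fun j => f (i.succAbove j)) g) * ι R (f m) = 0 := by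
  obtain ⟨z, rfl⟩ := Fin.exists_succAbove_eq hm
  simpa using ιMulti_mul_ι_self (R := R) (Fin.append (fun j => f (i.succAbove j)) g)
    (Fin.castAdd k z)

theorem ιMulti_append_mul_ι_right {p k : ℕ} (f : Fin p → M) (g : Fin k → M) (j : Fin k) :
    ιMulti R (p + k) (Fin.append f g) * ι R (g j) = 0 := by
  simpa using ιMulti_mul_ι_self (R := R) (Fin.append f g) (Fin.natAdd p j)

end ExteriorAlgebra

theorem eq_iff_forall_inner_eq_of_span_eq_top {E ι : Type*} [NormedAddCommGroup E]
    [InnerProductSpace ℝ E] {b : ι → E} (hb : Submodule.span ℝ (Set.range b) = ⊤) {u u₀ : E} :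
    u = u₀ ↔ ∀ t, ⟪u, b t⟫_ℝ = ⟪u₀, b t⟫_ℝ := by
  refine ⟨fun h _ => h ▸ rfl, fun h => ext_inner_right ℝ fun x => ?_⟩
  exact LinearMap.congr_fun (LinearMap.ext_on_range hb (f := innerₛₗ ℝ u) (g := innerₛₗ ℝ u₀) h) x

namespace HodgeData

variable {E : Type*} [NormedAddCommGroup E] [InnerProductSpace ℝ E]

section

variable {n : ℕ} (H : HodgeData E n)

theorem B_ι_ι (x y : E) : H.B (ι ℝ x) (ι ℝ y) = ⟪x, y⟫_ℝ := by
  simpa [Matrix.det_fin_one] using H.B_gram 1 ![x] ![y]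

theorem B_one_one : H.B 1 1 = 1 := by
  simpa using H.B_gram 0 Fin.elim0 Fin.elim0

theorem B_vol_vol_s13 : H.B H.vol H.vol = 1 := by
  rw [vol, H.B_gram, ← Matrix.gram, Matrix.gram_eq_one_iff_orthonormal.mpr H.e.orthonormal,
    Matrix.det_one]

theorem B_ιMulti_self_ne_zero {p : ℕ} {f : Fin p → E} (hf : LinearIndependent ℝ f) :
    H.B (ιMulti ℝ p f) (ιMulti ℝ p f) ≠ 0 := by
  rw [H.B_gram, ← Matrix.gram]
  exact Matrix.det_gram_ne_zero_iff_linearIndependent.mpr hf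

theorem smul_vol_injective : Function.Injective fun c : ℝ => c • H.vol := by
  intro a b hab
  simpa [H.B_vol_vol_s13] using congrArg (H.B · H.vol) hab

theorem norm_smul_vol_sq (c : ℝ) : H.norm (c • H.vol) ^ 2 = c ^ 2 := by
  rw [norm, Real.sq_sqrt] <;> simp [H.B_vol_vol_s13, sq, mul_self_nonneg]

theorem exists_star_eq_algebraMap {W : ExteriorAlgebra ℝ E} (hW : W ∈ ⋀[ℝ]^n E) :
    ∃ c : ℝ, H.star n W = algebraMap ℝ _ c ∧ W = c • H.vol := by
  have hstar := H.star_mem n W hW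
  rw [Nat.sub_self, exteriorPower, pow_zero] at hstar
  obtain ⟨c, hc⟩ := Submodule.mem_one.mp hstar
  refine ⟨c, hc.symm, ?_⟩
  have h1 : (1 : ExteriorAlgebra ℝ E) ∈ ⋀[ℝ]^(n - n) E := by
    rw [Nat.sub_self, exteriorPower, pow_zero]
    exact Submodule.mem_one.mpr ⟨1, map_one _⟩
  have := H.star_eq n W 1 hW h1
  rwa [← hc, Algebra.algebraMap_eq_smul_one, map_smul, LinearMap.smul_apply, B_one_one,
    smul_eq_mul, mul_one, mul_one, eq_comm] at this

theorem exists_ι_eq_star (hn : 0 < n) {ν : ExteriorAlgebra ℝ E} (hν : ν ∈ ⋀[ℝ]^(n - 1) E) :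
    ∃ y : E, ι ℝ y = H.star (n - 1) ν ∧ ∀ x, ⟪y, x⟫_ℝ • H.vol = ν * ι ℝ x := by
  have hsub : n - (n - 1) = 1 := by omega
  have hstar := H.star_mem _ ν hν
  rw [hsub, exteriorPower, pow_one] at hstar
  obtain ⟨y, hy⟩ := hstar
  refine ⟨y, hy, fun x => ?_⟩
  have hx : ι ℝ x ∈ ⋀[ℝ]^(n - (n - 1)) E := by
    rw [hsub, exteriorPower, pow_one]
    exact LinearMap.mem_range_self _ x
  rw [← H.B_ι_ι, hy]
  exact H.star_eq _ ν _ hν hx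

end

theorem exists_dual_vector {k q : ℕ} (H : HodgeData E (k + (q + 1))) (w : Fin (q + 1) → E)
    (v : Fin k → E) {c : ℝ}
    (hstar : H.star (k + (q + 1)) (ιMulti ℝ (q + 1 + k) (Fin.append w v)) = algebraMap ℝ _ c)
    (hvol : ιMulti ℝ (q + 1 + k) (Fin.append w v) = c • H.vol) (i : Fin (q + 1)) :
    ∃ θ : E, ι ℝ θ = H.star (k + (q + 1) - 1)
        (ιMulti ℝ (q + k) (Fin.append (fun j => w (i.succAbove j)) v) *
          H.star (k + (q + 1)) (ιMulti ℝ (q + 1 + k) (Fin.append w v))) ∧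
      (∀ j, ⟪θ, v j⟫_ℝ = 0) ∧
      ∀ m, ⟪θ, w m⟫_ℝ = if m = i then (-1) ^ (k + (q + 1) - (i + 1)) * c ^ 2 else 0 := by
  set ν := ιMulti ℝ (q + k) (Fin.append (fun j => w (i.succAbove j)) v)
  rw [hstar, ← Algebra.commutes, ← Algebra.smul_def]
  have hν : c • ν ∈ ⋀[ℝ]^(k + (q + 1) - 1) E := by
    rw [show k + (q + 1) - 1 = q + k by omega]
    exact Submodule.smul_mem _ _ (ιMulti_range ℝ _ ⟨_, rfl⟩)
  obtain ⟨θ, hθ, hinner⟩ := H.exists_ι_eq_star (by omega) hν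
  refine ⟨θ, hθ, fun j => H.smul_vol_injective ?_, fun m => H.smul_vol_injective ?_⟩
  · simp only [hinner, smul_mul_assoc, ν, ιMulti_append_mul_ι_right, smul_zero, zero_smul]
  split_ifs with hm
  · subst hm
    have hexp : k + (q + 1) - (m + 1) = k + (q - m) := by omega
    simp only [hinner, smul_mul_assoc, ν, ιMulti_append_succAbove_mul_ι, hvol, smul_smul, hexp]
    congr 1
    ring
  · simp only [hinner, smul_mul_assoc, ν, ιMulti_append_succAbove_mul_ι_of_ne _ _ hm, smul_zero,
      zero_smul]

end HodgeData

theorem stmt13_general {E : Type*} [NormedAddCommGroup E] [InnerProductSpace ℝ E] (k q : ℕ)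
    (H : HodgeData E (k + (q + 1)))
    (lam : Fin (q + 1) → ℝ)
    (v : Fin k → E) (w : Fin (q + 1) → E)
    (hindep : LinearIndependent ℝ (Fin.append w v))
    (hspan : Submodule.span ℝ (Set.range (Fin.append w v)) = ⊤)
    (W : ExteriorAlgebra ℝ E)
    (hW : W = ExteriorAlgebra.ιMulti ℝ (q + 1 + k) (Fin.append w v))
    (Θ : Fin (q + 1) → ExteriorAlgebra ℝ E)
    (hΘ : ∀ i, Θ i = H.star (k + (q + 1) - 1)
      (ExteriorAlgebra.ιMulti ℝ (q + k)
          (Fin.append (fun j => w (i.succAbove j)) v)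
        * H.star (k + (q + 1)) W)) :
    ∀ u : E,
      ((∀ j, (inner ℝ u (v j) : ℝ) = 0) ∧ ∀ i, (inner ℝ u (w i) : ℝ) = lam i) ↔
        ExteriorAlgebra.ι ℝ u = (H.norm W ^ 2)⁻¹ •
          ∑ i : Fin (q + 1),
            (((-1 : ℝ)) ^ (k + (q + 1) - ((i : ℕ) + 1)) * lam i) • Θ i := by
  subst hW
  obtain ⟨c, hstar, hvol⟩ := H.exists_star_eq_algebraMap
    (by rw [add_comm k]; exact ιMulti_range ℝ _ ⟨Fin.append w v, rfl⟩)
  have hc : c ≠ 0 := by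
    rintro rfl
    exact H.B_ιMulti_self_ne_zero hindep (by simp [hvol])
  choose θ hθ hθv hθw using H.exists_dual_vector w v hstar hvol
  set u₀ := (c ^ 2)⁻¹ • ∑ i : Fin (q + 1),
    ((-1 : ℝ) ^ (k + (q + 1) - ((i : ℕ) + 1)) * lam i) • θ i with hu₀
  have hinner (x : E) : ⟪u₀, x⟫_ℝ = (c ^ 2)⁻¹ *
      ∑ i : Fin (q + 1), (-1 : ℝ) ^ (k + (q + 1) - ((i : ℕ) + 1)) * lam i * ⟪θ i, x⟫_ℝ := by
    simp only [u₀, real_inner_smul_left, sum_inner]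
  have hu₀v (j : Fin k) : ⟪u₀, v j⟫_ℝ = 0 := by simp [hinner, hθv]
  have hu₀w (m : Fin (q + 1)) : ⟪u₀, w m⟫_ℝ = lam m := by
    simp only [hinner, hθw, mul_ite, mul_zero, Finset.sum_ite_eq, Finset.mem_univ, if_true]
    rw [mul_mul_mul_comm, ← pow_add, ← two_mul, pow_mul, neg_one_sq, one_pow, one_mul]
    field_simp
  intro u
  rw [hvol, H.norm_smul_vol_sq]
  simp only [hΘ, ← hθ, ← map_smul, ← map_sum, ι_inj]
  rw [← hu₀, eq_iff_forall_inner_eq_of_span_eq_top hspan, Fin.forall_fin_add (m := q + 1), and_comm]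
  simp only [Fin.append_left, Fin.append_right, hu₀v, hu₀w]

/-- The case k + p = n: the system has a unique solution u₀ given by the explicit
formula. Here p = q + 1 > 0, k > 0, and dim E = n = k + (q + 1). -/
theorem stmt13 {E : Type*} [NormedAddCommGroup E] [InnerProductSpace ℝ E] (k q : ℕ)
    (hk : 0 < k) (H : HodgeData E (k + (q + 1)))
    (lam : Fin (q + 1) → ℝ)
    (v : Fin k → E) (w : Fin (q + 1) → E)
    (hindep : LinearIndependent ℝ (Fin.append w v))
    (hspan : Submodule.span ℝ (Set.range (Fin.append w v)) = ⊤)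
    (W : ExteriorAlgebra ℝ E)
    (hW : W = ExteriorAlgebra.ιMulti ℝ (q + 1 + k) (Fin.append w v))
    (Θ : Fin (q + 1) → ExteriorAlgebra ℝ E)
    (hΘ : ∀ i, Θ i = H.star (k + (q + 1) - 1)
      (ExteriorAlgebra.ιMulti ℝ (q + k)
          (Fin.append (fun j => w (i.succAbove j)) v)
        * H.star (k + (q + 1)) W)) :
    ∀ u : E,
      ((∀ j, (inner ℝ u (v j) : ℝ) = 0) ∧ ∀ i, (inner ℝ u (w i) : ℝ) = lam i) ↔
        ExteriorAlgebra.ι ℝ u = (H.norm W ^ 2)⁻¹ •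
          ∑ i : Fin (q + 1),
            (((-1 : ℝ)) ^ (k + (q + 1) - ((i : ℕ) + 1)) * lam i) • Θ i :=
  stmt13_general k q H lam v w hindep hspan W hW Θ hΘ
end
end

section
/- Let E be an oriented n-dimensional real inner product space, let n ≥ 2 and let {w_1, …, w_p} ⊂ E be linearly independent with 0 < p < n, and let λ_1, …, λ_p be nonzero reals. Define u_0 = ‖⋀_{i=1}^p w_i‖_p^{−2} Σ_{i=1}^p (−1)^{n−i} λ_i ⋆[ (⋀_{j≠i} w_j) ∧ ⋆(⋀_{j=1}^p w_j) ]. Then ⟨u_0, w_i⟩ = λ_i for all i ∈ {1, …, p}, and moreover u_0 lies in the span of {w_1, …, w_p}. -/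
noncomputable section

open ExteriorAlgebra Module

section GenLemmas

variable {E : Type*} [NormedAddCommGroup E] [InnerProductSpace ℝ E]

lemma ιMulti_cast {m m' : ℕ} (h : m = m') (u : Fin m' → E) :
    ExteriorAlgebra.ιMulti ℝ m (u ∘ Fin.cast h) = ExteriorAlgebra.ιMulti ℝ m' u := by
  subst h
  congr 1

lemma ιMulti_cons {m : ℕ} (a : E) (u : Fin m → E) :
    ExteriorAlgebra.ιMulti ℝ (m + 1) (Fin.cons a u)
      = ExteriorAlgebra.ι ℝ a * ExteriorAlgebra.ιMulti ℝ m u := by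
  rw [ExteriorAlgebra.ιMulti_succ_apply]
  have : Fin.cons a u ∘ Fin.succ = u := by funext i; simp
  simp [Matrix.vecTail, this]

lemma ιMulti_append {p m : ℕ} (u : Fin p → E) (v : Fin m → E) :
    ExteriorAlgebra.ιMulti ℝ (p + m) (Fin.append u v) =
      ExteriorAlgebra.ιMulti ℝ p u * ExteriorAlgebra.ιMulti ℝ m v := by
  induction p with
  | zero =>
      rw [ExteriorAlgebra.ιMulti_zero_apply, one_mul,
        ← ιMulti_cast (Nat.zero_add m) v]
      congr 1
      funext i
      simp [Fin.append, Fin.addCases, Fin.subNat, Fin.cast]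
  | succ p ih =>
      have hu : u = Fin.cons (u 0) (fun i => u i.succ) := (Fin.cons_self_tail u).symm
      rw [hu, Fin.append_cons]
      rw [ιMulti_cast (Nat.add_right_comm p 1 m) _]
      rw [ιMulti_cons, ιMulti_cons, ih, mul_assoc]

lemma ιMulti_mul_ι_comm_dec (v : E) (m : ℕ) :
    ∀ u : Fin m → E, ExteriorAlgebra.ιMulti ℝ m u * ExteriorAlgebra.ι ℝ v
      = ((-1 : ℝ)) ^ m • (ExteriorAlgebra.ι ℝ v * ExteriorAlgebra.ιMulti ℝ m u) := by
  induction m with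
  | zero => intro u; simp
  | succ p ih =>
      intro u
      rw [ExteriorAlgebra.ιMulti_succ_apply]
      have h0 : ExteriorAlgebra.ι ℝ (u 0) * ExteriorAlgebra.ι ℝ v
          = -(ExteriorAlgebra.ι ℝ v * ExteriorAlgebra.ι ℝ (u 0)) := by
        have := ExteriorAlgebra.ι_add_mul_swap (R := ℝ) (u 0) v
        linear_combination (norm := noncomm_ring) this
      rw [mul_assoc, ih (Matrix.vecTail u), mul_smul_comm, ← mul_assoc, h0,
        neg_mul, smul_neg, ← neg_smul, mul_assoc]
      congr 1
      rw [pow_succ]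
      ring

lemma ιMulti_mul_ι_comm {m : ℕ} {x : ExteriorAlgebra ℝ E} (hx : x ∈ ⋀[ℝ]^m E) (v : E) :
    x * ExteriorAlgebra.ι ℝ v = ((-1 : ℝ)) ^ m • (ExteriorAlgebra.ι ℝ v * x) := by
  have hdec := ιMulti_mul_ι_comm_dec (E := E) v m
  rw [← ExteriorAlgebra.ιMulti_span_fixedDegree] at hx
  induction hx using Submodule.span_induction with
  | mem x hmem => obtain ⟨u, rfl⟩ := hmem; exact hdec u
  | zero => simp
  | add x y hx hy ihx ihy => rw [add_mul, mul_add, ihx, ihy, smul_add]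
  | smul a x hx ihx => rw [smul_mul_assoc, ihx, mul_smul_comm, smul_comm]

lemma mul_mem_exteriorPower {a b : ℕ} {x y : ExteriorAlgebra ℝ E}
    (hx : x ∈ ⋀[ℝ]^a E) (hy : y ∈ ⋀[ℝ]^b E) : x * y ∈ ⋀[ℝ]^(a+b) E := by
  rw [exteriorPower, pow_add]
  exact Submodule.mul_mem_mul hx hy

lemma mem_exteriorPower_one_iff {x : ExteriorAlgebra ℝ E} :
    x ∈ ⋀[ℝ]^1 E ↔ ∃ v : E, ExteriorAlgebra.ι ℝ v = x := by
  show x ∈ LinearMap.range (ExteriorAlgebra.ι ℝ (M := E)) ^ 1 ↔ _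
  rw [pow_one]
  exact LinearMap.mem_range

end GenLemmas
section HodgeLemmas

variable {E : Type*} [NormedAddCommGroup E] [InnerProductSpace ℝ E] {n : ℕ} (H : HodgeData E n)

/-- basis elements of the exterior powers -/
def bvec {p : ℕ} (S : {s : Finset (Fin n) // s.card = p}) : ExteriorAlgebra ℝ E :=
  ExteriorAlgebra.ιMulti ℝ p (fun a => H.e (S.1.orderEmbOfFin S.2 a))

lemma bvec_mem {p : ℕ} (S : {s : Finset (Fin n) // s.card = p}) : bvec H S ∈ ⋀[ℝ]^p E :=
  ExteriorAlgebra.ιMulti_range ℝ p ⟨_, rfl⟩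

lemma inner_e (i j : Fin n) : (inner ℝ (H.e i) (H.e j) : ℝ) = if i = j then 1 else 0 :=
  orthonormal_iff_ite.mp H.e.orthonormal i j

lemma bvec_gram {p : ℕ} (S T : {s : Finset (Fin n) // s.card = p}) :
    H.B (bvec H S) (bvec H T) = if S = T then 1 else 0 := by
  rw [bvec, bvec, H.B_gram]
  by_cases h : S = T
  · subst h
    rw [if_pos rfl]
    have h1 : (Matrix.of fun i j =>
        (inner ℝ (H.e (S.1.orderEmbOfFin S.2 i)) (H.e (S.1.orderEmbOfFin S.2 j)) : ℝ)) = 1 := by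
      ext i j
      rw [Matrix.of_apply, inner_e, Matrix.one_apply]
      simp [(S.1.orderEmbOfFin S.2).injective.eq_iff]
    rw [h1, Matrix.det_one]
  · rw [if_neg h]
    obtain ⟨x, hxS, hxT⟩ : ∃ x, x ∈ S.1 ∧ x ∉ T.1 := by
      by_contra hc
      push_neg at hc
      exact h (Subtype.ext (Finset.eq_of_subset_of_card_le (fun a ha => hc a ha)
        (le_of_eq (T.2.trans S.2.symm))))
    obtain ⟨i, hi⟩ : ∃ i, S.1.orderEmbOfFin S.2 i = x := by
      have hr := Finset.range_orderEmbOfFin S.1 S.2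
      have : x ∈ Set.range (S.1.orderEmbOfFin S.2) := by rw [hr]; exact hxS
      exact this
    apply Matrix.det_eq_zero_of_row_eq_zero i
    intro j
    rw [Matrix.of_apply, inner_e, if_neg]
    intro hEq
    exact hxT (by rw [← hi, hEq]; exact Finset.orderEmbOfFin_mem T.1 T.2 j)

lemma mem_span_bvec {p : ℕ} {x : ExteriorAlgebra ℝ E} (hx : x ∈ ⋀[ℝ]^p E) :
    x ∈ Submodule.span ℝ (Set.range (bvec H (p := p))) := by
  rw [← ExteriorAlgebra.ιMulti_span_fixedDegree] at hx
  induction hx using Submodule.span_induction with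
  | zero => exact Submodule.zero_mem _
  | add x y _ _ ihx ihy => exact Submodule.add_mem _ ihx ihy
  | smul a x _ ihx => exact Submodule.smul_mem _ a ihx
  | mem x hmem =>
    obtain ⟨v, rfl⟩ := hmem
    have hv : v = fun i => ∑ k, H.e.repr (v i) k • H.e k := by
      funext i; exact (H.e.sum_repr (v i)).symm
    rw [hv]
    have hexp := (ExteriorAlgebra.ιMulti ℝ p (M := E)).toMultilinearMap.map_sum
      (g := fun i k => H.e.repr (v i) k • H.e k)
    rw [AlternatingMap.coe_multilinearMap] at hexp
    rw [hexp]
    apply Submodule.sum_mem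
    intro r _
    have hsm := (ExteriorAlgebra.ιMulti ℝ p (M := E)).toMultilinearMap.map_smul_univ
      (fun i => H.e.repr (v i) (r i)) (fun i => H.e (r i))
    rw [AlternatingMap.coe_multilinearMap] at hsm
    rw [hsm]
    apply Submodule.smul_mem
    by_cases hr : Function.Injective r
    · have hcard : (Finset.univ.image r).card = p := by
        rw [Finset.card_image_of_injective _ hr, Finset.card_univ, Fintype.card_fin]
      have hmem2 : ∀ i, r i ∈ Finset.univ.image r :=
        fun i => Finset.mem_image_of_mem r (Finset.mem_univ i)
      set σ : Fin p → Fin p :=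
        fun i => ((Finset.univ.image r).orderIsoOfFin hcard).symm ⟨r i, hmem2 i⟩ with hσ
      have hσinj : Function.Injective σ := by
        intro i j hij
        apply hr
        have := congrArg (fun y => ((((Finset.univ.image r).orderIsoOfFin hcard) y : Fin n))) hij
        simpa [hσ] using this
      set τ : Equiv.Perm (Fin p) := Equiv.ofBijective σ
        (Finite.injective_iff_bijective.mp hσinj) with hτ
      have hfun : (fun i => H.e (r i)) =
          (fun a => H.e ((Finset.univ.image r).orderEmbOfFin hcard a)) ∘ τ := by
        funext i
        simp only [Function.comp_apply, hτ, Equiv.ofBijective_apply, hσ]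
        rw [← Finset.coe_orderIsoOfFin_apply]
        simp
      rw [hfun, AlternatingMap.map_perm, Units.smul_def, ← Int.cast_smul_eq_zsmul ℝ]
      apply Submodule.smul_mem
      exact Submodule.subset_span ⟨⟨Finset.univ.image r, hcard⟩, rfl⟩
    · rw [Function.not_injective_iff] at hr
      obtain ⟨a, b, hab, hne⟩ := hr
      rw [AlternatingMap.map_eq_zero_of_eq _ _ (by rw [hab]) hne]
      exact Submodule.zero_mem _

lemma exists_bvec_rep {p : ℕ} {x : ExteriorAlgebra ℝ E} (hx : x ∈ ⋀[ℝ]^p E) :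
    ∃ c : {s : Finset (Fin n) // s.card = p} → ℝ, x = ∑ S, c S • bvec H S := by
  have hmem := mem_span_bvec H hx
  rw [Submodule.mem_span_range_iff_exists_fun] at hmem
  obtain ⟨c, hc⟩ := hmem
  exact ⟨c, hc.symm⟩

lemma B_sum_sq {p : ℕ} (c : {s : Finset (Fin n) // s.card = p} → ℝ) :
    H.B (∑ S, c S • bvec H S) (∑ S, c S • bvec H S) = ∑ S, c S * c S := by
  simp only [map_sum, map_smul, LinearMap.sum_apply, LinearMap.smul_apply, smul_eq_mul,
    bvec_gram, Finset.mul_sum]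
  rw [Finset.sum_comm]
  apply Finset.sum_congr rfl
  intro S _
  simp [mul_ite, Finset.sum_ite_eq, Finset.mem_univ, mul_comm]

lemma B_self_nonneg {p : ℕ} {x : ExteriorAlgebra ℝ E} (hx : x ∈ ⋀[ℝ]^p E) :
    0 ≤ H.B x x := by
  obtain ⟨c, rfl⟩ := exists_bvec_rep H hx
  rw [B_sum_sq]
  exact Finset.sum_nonneg fun S _ => mul_self_nonneg (c S)

lemma eq_zero_of_B_self_eq_zero {p : ℕ} {x : ExteriorAlgebra ℝ E} (hx : x ∈ ⋀[ℝ]^p E)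
    (h : H.B x x = 0) : x = 0 := by
  obtain ⟨c, rfl⟩ := exists_bvec_rep H hx
  rw [B_sum_sq] at h
  have hc : ∀ S ∈ Finset.univ, c S * c S = 0 :=
    (Finset.sum_eq_zero_iff_of_nonneg fun S _ => mul_self_nonneg (c S)).mp h
  apply Finset.sum_eq_zero
  intro S _
  rw [mul_self_eq_zero.mp (hc S (Finset.mem_univ S)), zero_smul]

lemma eq_zero_of_B_bvec {p : ℕ} {x : ExteriorAlgebra ℝ E} (hx : x ∈ ⋀[ℝ]^p E)
    (h : ∀ S : {s : Finset (Fin n) // s.card = p}, H.B x (bvec H S) = 0) : x = 0 := by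
  apply eq_zero_of_B_self_eq_zero H hx
  obtain ⟨c, hc⟩ := exists_bvec_rep H hx
  calc H.B x x = H.B x (∑ S, c S • bvec H S) := by rw [← hc]
  _ = 0 := by simp [map_sum, map_smul, h, smul_eq_mul]

lemma B_mu : H.B (ExteriorAlgebra.ιMulti ℝ n ⇑H.e) (ExteriorAlgebra.ιMulti ℝ n ⇑H.e) = 1 := by
  rw [H.B_gram]
  have h1 : (Matrix.of fun i j => (inner ℝ (H.e i) (H.e j) : ℝ)) = 1 := by
    ext i j; rw [Matrix.of_apply, inner_e, Matrix.one_apply]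
  rw [h1, Matrix.det_one]

lemma smul_mu_inj {r s : ℝ}
    (h : r • (ExteriorAlgebra.ιMulti ℝ n ⇑H.e) = s • (ExteriorAlgebra.ιMulti ℝ n ⇑H.e)) :
    r = s := by
  have h2 := congrArg (fun z => H.B z (ExteriorAlgebra.ιMulti ℝ n ⇑H.e)) h
  simpa [map_smul, LinearMap.smul_apply, smul_eq_mul, B_mu H] using h2

end HodgeLemmas
section StarLemmas

variable {E : Type*} [NormedAddCommGroup E] [InnerProductSpace ℝ E] {n : ℕ} (H : HodgeData E n)

/-- the complement of a `p`-subset, as an `(n-p)`-subset -/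
def bcompl {p : ℕ} (S : {s : Finset (Fin n) // s.card = p}) :
    {s : Finset (Fin n) // s.card = n - p} :=
  ⟨S.1ᶜ, by rw [Finset.card_compl, S.2, Fintype.card_fin]⟩

lemma bvec_mul_bvec_ne {p : ℕ} (S : {s : Finset (Fin n) // s.card = p})
    (T : {s : Finset (Fin n) // s.card = n - p}) (hp : p ≤ n) (hT : T.1 ≠ S.1ᶜ) :
    bvec H S * bvec H T = 0 := by
  obtain ⟨x, hxS, hxT⟩ : ∃ x, x ∈ S.1 ∧ x ∈ T.1 := by
    by_contra hc
    push_neg at hc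
    apply hT
    apply Finset.eq_of_subset_of_card_le
    · exact fun a ha => Finset.mem_compl.mpr (fun haS => hc a haS ha)
    · refine le_of_eq ?_
      rw [Finset.card_compl, S.2, Fintype.card_fin, T.2]
  obtain ⟨i, hi⟩ : ∃ i, S.1.orderEmbOfFin S.2 i = x := by
    have hr := Finset.range_orderEmbOfFin S.1 S.2
    show x ∈ Set.range (S.1.orderEmbOfFin S.2)
    rw [hr]; exact hxS
  obtain ⟨j, hj⟩ : ∃ j, T.1.orderEmbOfFin T.2 j = x := by
    have hr := Finset.range_orderEmbOfFin T.1 T.2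
    show x ∈ Set.range (T.1.orderEmbOfFin T.2)
    rw [hr]; exact hxT
  rw [bvec, bvec, ← ιMulti_append]
  apply AlternatingMap.map_eq_zero_of_eq _ _
    (i := Fin.castAdd (n - p) i) (j := Fin.natAdd p j)
  · rw [Fin.append_left, Fin.append_right, hi, hj]
  · apply Fin.ne_of_val_ne
    have := i.isLt
    simp only [Fin.coe_castAdd, Fin.coe_natAdd]
    omega

lemma bvec_mul_bvec_compl {p : ℕ} (hp : p ≤ n) (S : {s : Finset (Fin n) // s.card = p}) :
    ∃ ε : ℝ, ε ^ 2 = 1 ∧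
      bvec H S * bvec H (bcompl S) = ε • ExteriorAlgebra.ιMulti ℝ n ⇑H.e := by
  have hc : S.1ᶜ.card = n - p := (bcompl S).2
  have hn : n = p + (n - p) := by omega
  let τ : Equiv.Perm (Fin n) :=
    (finCongr hn).trans ((finSumFinEquiv.symm).trans
      ((Equiv.sumCongr (S.1.orderIsoOfFin S.2).toEquiv ((S.1ᶜ).orderIsoOfFin hc).toEquiv).trans
        ((Equiv.sumCongr (Equiv.refl _)
          (Equiv.subtypeEquivRight (fun x => Finset.mem_compl))).trans
          (Equiv.sumCompl (· ∈ S.1)))))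
  have key : bvec H S * bvec H (bcompl S) = ExteriorAlgebra.ιMulti ℝ n (⇑H.e ∘ τ) := by
    rw [bvec, bvec, ← ιMulti_append, ← ιMulti_cast hn (Fin.append _ _)]
    congr 1
    funext x
    obtain ⟨y, hy⟩ : ∃ y, finSumFinEquiv y = Fin.cast hn x :=
      ⟨finSumFinEquiv.symm (Fin.cast hn x), Equiv.apply_symm_apply _ _⟩
    have hτ : τ x = (Equiv.sumCompl (· ∈ S.1))
        ((Equiv.sumCongr (Equiv.refl _) (Equiv.subtypeEquivRight (fun x => Finset.mem_compl)))
          ((Equiv.sumCongr (S.1.orderIsoOfFin S.2).toEquiv ((S.1ᶜ).orderIsoOfFin hc).toEquiv)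
            (finSumFinEquiv.symm (Fin.cast hn x)))) := rfl
    simp only [Function.comp_apply]
    rw [hτ, ← hy, Equiv.symm_apply_apply]
    cases y with
    | inl a =>
        rw [finSumFinEquiv_apply_left, Fin.append_left]
        simp [Finset.coe_orderIsoOfFin_apply]
    | inr b =>
        rw [finSumFinEquiv_apply_right, Fin.append_right]
        simp only [Equiv.sumCongr_apply, Sum.map_inr, Equiv.sumCompl_apply_inr,
          Equiv.subtypeEquivRight_apply_coe]
        rfl
  refine ⟨((Equiv.Perm.sign τ : ℤˣ) : ℤ), ?_, ?_⟩
  · calc ((((Equiv.Perm.sign τ : ℤˣ) : ℤ) : ℝ))^2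
        = (((Equiv.Perm.sign τ ^ 2 : ℤˣ) : ℤ) : ℝ) := by push_cast; ring
    _ = 1 := by rw [Int.units_sq]; norm_num
  · rw [key]
    have := AlternatingMap.map_perm (ExteriorAlgebra.ιMulti ℝ n (M := E)) ⇑H.e τ
    rw [this, Units.smul_def, ← Int.cast_smul_eq_zsmul ℝ]

lemma star_bvec {p : ℕ} (hp : p ≤ n) (S : {s : Finset (Fin n) // s.card = p}) :
    ∃ ε : ℝ, ε ^ 2 = 1 ∧ H.star p (bvec H S) = ε • bvec H (bcompl S) := by
  obtain ⟨ε, hε2, hprod⟩ := bvec_mul_bvec_compl H hp S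
  refine ⟨ε, hε2, ?_⟩
  have hx : H.star p (bvec H S) - ε • bvec H (bcompl S) ∈ ⋀[ℝ]^(n-p) E :=
    Submodule.sub_mem _ (H.star_mem p _ (bvec_mem H S)) (Submodule.smul_mem _ _ (bvec_mem H _))
  have h0 : H.star p (bvec H S) - ε • bvec H (bcompl S) = 0 := by
    apply eq_zero_of_B_bvec H hx
    intro T
    rw [map_sub, LinearMap.sub_apply, map_smul, LinearMap.smul_apply, bvec_gram, smul_eq_mul]
    have hstar := H.star_eq p (bvec H S) (bvec H T) (bvec_mem H S) (bvec_mem H T)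
    by_cases hT : T = bcompl S
    · subst hT
      have hB : H.B (H.star p (bvec H S)) (bvec H (bcompl S)) = ε :=
        smul_mu_inj H (by rw [hstar, hprod])
      rw [hB, if_pos rfl, mul_one, sub_self]
    · have hne : T.1 ≠ S.1ᶜ := fun hc => hT (Subtype.ext hc)
      have hB : H.B (H.star p (bvec H S)) (bvec H T) = 0 :=
        smul_mu_inj H (by rw [hstar, bvec_mul_bvec_ne H S T hp hne, zero_smul])
      rw [hB, if_neg (fun hc => hT hc.symm), mul_zero, sub_zero]
  rw [sub_eq_zero] at h0
  exact h0

lemma star_bvec_isom {p : ℕ} (hp : p ≤ n) (S T : {s : Finset (Fin n) // s.card = p}) :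
    H.B (H.star p (bvec H S)) (H.star p (bvec H T)) = H.B (bvec H S) (bvec H T) := by
  obtain ⟨ε1, he1, h1⟩ := star_bvec H hp S
  obtain ⟨ε2, he2, h2⟩ := star_bvec H hp T
  rw [h1, h2, LinearMap.map_smul₂, map_smul, bvec_gram, smul_eq_mul, smul_eq_mul, bvec_gram]
  by_cases h : S = T
  · subst h
    have hee : ε1 = ε2 := by
      have h12 := h1.symm.trans h2
      have b := congrArg (fun z => H.B z (bvec H (bcompl S))) h12
      simpa [map_smul, bvec_gram] using b
    rw [if_pos rfl, if_pos rfl, hee]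
    linear_combination he2
  · have hcne : bcompl S ≠ bcompl (p := p) T := by
      intro hcc
      apply h
      apply Subtype.ext
      have := congrArg Subtype.val hcc
      simpa [bcompl, compl_inj_iff] using this
    rw [if_neg h, if_neg hcne, mul_zero, mul_zero]

lemma hodge_star_isometry {p : ℕ} (hp : p ≤ n) {x y : ExteriorAlgebra ℝ E}
    (hx : x ∈ ⋀[ℝ]^p E) (hy : y ∈ ⋀[ℝ]^p E) :
    H.B (H.star p x) (H.star p y) = H.B x y := by
  obtain ⟨c, rfl⟩ := exists_bvec_rep H hx
  obtain ⟨d, rfl⟩ := exists_bvec_rep H hy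
  simp only [map_sum, map_smul, LinearMap.sum_apply, LinearMap.smul_apply, smul_eq_mul]
  refine Finset.sum_congr rfl fun S _ => ?_
  congr 1
  refine Finset.sum_congr rfl fun T _ => ?_
  rw [star_bvec_isom H hp]

end StarLemmas
section Final

variable {E : Type*} [NormedAddCommGroup E] [InnerProductSpace ℝ E] {n : ℕ} (H : HodgeData E n)

lemma B_iota (x y : E) :
    H.B (ExteriorAlgebra.ι ℝ x) (ExteriorAlgebra.ι ℝ y) = (inner ℝ x y : ℝ) := by
  have hx : ExteriorAlgebra.ι ℝ x = ExteriorAlgebra.ιMulti ℝ 1 ![x] := by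
    rw [ExteriorAlgebra.ιMulti_succ_apply]; simp
  have hy : ExteriorAlgebra.ι ℝ y = ExteriorAlgebra.ιMulti ℝ 1 ![y] := by
    rw [ExteriorAlgebra.ιMulti_succ_apply]; simp
  rw [hx, hy, H.B_gram, Matrix.det_fin_one]
  simp

lemma gram_det_ne_zero {p : ℕ} {w : Fin p → E} (hw : LinearIndependent ℝ w) :
    (Matrix.of fun i j => (inner ℝ (w i) (w j) : ℝ)).det ≠ 0 := by
  intro hdet
  obtain ⟨v, hv0, hmul⟩ := (Matrix.exists_mulVec_eq_zero_iff).mpr hdet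
  set x := ∑ j, v j • w j with hx
  have hwx : ∀ i, (inner ℝ (w i) x : ℝ) = 0 := by
    intro i
    have h2 := congrFun hmul i
    rw [Matrix.mulVec] at h2
    have h3 : ∑ j, (inner ℝ (w i) (w j) : ℝ) * v j = 0 := h2
    rw [hx, inner_sum]
    simpa [real_inner_smul_right, mul_comm] using h3
  have hxx : (inner ℝ x x : ℝ) = 0 := by
    nth_rewrite 1 [hx]
    rw [sum_inner]
    simp only [real_inner_smul_left]
    exact Finset.sum_eq_zero fun i _ => by rw [hwx i, mul_zero]
  have hx0 : x = 0 := inner_self_eq_zero.mp hxx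
  have hvz : ∀ i, v i = 0 :=
    Fintype.linearIndependent_iff.mp hw v (by rw [← hx]; exact hx0)
  exact hv0 (funext hvz)

end Final
/-- The case k = 0: u₀ satisfies ⟨u₀, w_i⟩ = λ_i and lies in the span of the w_i.
Here p = q + 1 with 0 < p < n. -/
theorem stmt14 {E : Type*} [NormedAddCommGroup E] [InnerProductSpace ℝ E] (n q : ℕ)
    (hn : q + 1 < n) (H : HodgeData E n)
    (lam : Fin (q + 1) → ℝ) (hlam : ∀ i, lam i ≠ 0)
    (w : Fin (q + 1) → E) (hindep : LinearIndependent ℝ w)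
    (W : ExteriorAlgebra ℝ E)
    (hW : W = ExteriorAlgebra.ιMulti ℝ (q + 1) w)
    (Θ : Fin (q + 1) → ExteriorAlgebra ℝ E)
    (hΘ : ∀ i, Θ i = H.star (n - 1)
      (ExteriorAlgebra.ιMulti ℝ q (fun j => w (i.succAbove j)) * H.star (q + 1) W))
    (u₀ : E)
    (hu₀ : ExteriorAlgebra.ι ℝ u₀ = (H.norm W ^ 2)⁻¹ •
      ∑ i : Fin (q + 1), (((-1 : ℝ)) ^ (n - ((i : ℕ) + 1)) * lam i) • Θ i) :
    (∀ i, (inner ℝ u₀ (w i) : ℝ) = lam i) ∧ u₀ ∈ Submodule.span ℝ (Set.range w) := by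
  have hq1 : q + 1 ≤ n := le_of_lt hn
  have hWmem : W ∈ ⋀[ℝ]^(q+1) E := by
    rw [hW]; exact ExteriorAlgebra.ιMulti_range ℝ _ ⟨_, rfl⟩
  have hstarW : H.star (q+1) W ∈ ⋀[ℝ]^(n - (q+1)) E := H.star_mem _ _ hWmem
  -- each Θ i is of the form ι (θ i)
  have hθex : ∀ i : Fin (q+1), ∃ t : E, ExteriorAlgebra.ι ℝ t = Θ i := by
    intro i
    have hWi : ExteriorAlgebra.ιMulti ℝ q (fun j => w (i.succAbove j)) ∈ ⋀[ℝ]^q E :=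
      ExteriorAlgebra.ιMulti_range ℝ _ ⟨_, rfl⟩
    have hmul := mul_mem_exteriorPower hWi hstarW
    have harith : q + (n - (q+1)) = n - 1 := by omega
    rw [harith] at hmul
    have hmem := H.star_mem (n-1) _ hmul
    have h1 : n - (n - 1) = 1 := by omega
    rw [h1] at hmem
    obtain ⟨t, ht⟩ := mem_exteriorPower_one_iff.mp hmem
    exact ⟨t, by rw [hΘ i, ← ht]⟩
  choose θ hθeq using hθex
  -- the key formula
  have hkey : ∀ (i : Fin (q+1)) (v : E),
      H.B (Θ i) (ExteriorAlgebra.ι ℝ v)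
        = ((-1 : ℝ)) ^ (n - 1) *
          H.B (ExteriorAlgebra.ιMulti ℝ (q+1) (Fin.cons v (fun j => w (i.succAbove j)))) W := by
    intro i v
    set Wi := ExteriorAlgebra.ιMulti ℝ q (fun j => w (i.succAbove j)) with hWidef
    have hWimem : Wi ∈ ⋀[ℝ]^q E := ExteriorAlgebra.ιMulti_range ℝ _ ⟨_, rfl⟩
    have hprodmem : Wi * H.star (q+1) W ∈ ⋀[ℝ]^(n-1) E := by
      have h2 := mul_mem_exteriorPower hWimem hstarW
      have harith : q + (n - (q+1)) = n - 1 := by omega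
      rwa [harith] at h2
    have hvmem : ExteriorAlgebra.ι ℝ v ∈ ⋀[ℝ]^(n - (n-1)) E := by
      have h1 : n - (n-1) = 1 := by omega
      rw [h1]
      exact mem_exteriorPower_one_iff.mpr ⟨v, rfl⟩
    have hstar1 := H.star_eq (n-1) (Wi * H.star (q+1) W) (ExteriorAlgebra.ι ℝ v) hprodmem hvmem
    have hcomm := ιMulti_mul_ι_comm hprodmem v
    have hconsY : ExteriorAlgebra.ι ℝ v * Wi
        = ExteriorAlgebra.ιMulti ℝ (q+1) (Fin.cons v (fun j => w (i.succAbove j))) :=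
      (ιMulti_cons v _).symm
    have hYmem : ExteriorAlgebra.ιMulti ℝ (q+1) (Fin.cons v (fun j => w (i.succAbove j)))
        ∈ ⋀[ℝ]^(q+1) E := ExteriorAlgebra.ιMulti_range ℝ _ ⟨_, rfl⟩
    have hstar2 := H.star_eq (q+1) _ (H.star (q+1) W) hYmem hstarW
    have hisom := hodge_star_isometry H hq1 hYmem hWmem
    rw [hΘ i]
    apply smul_mu_inj H
    rw [hstar1, hcomm, ← mul_assoc, hconsY, ← hstar2, hisom, smul_smul]
  -- inner products of θ i with arbitrary vectors
  have hinner : ∀ (i : Fin (q+1)) (v : E), (inner ℝ (θ i) v : ℝ)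
      = ((-1 : ℝ)) ^ (n - 1) *
        H.B (ExteriorAlgebra.ιMulti ℝ (q+1) (Fin.cons v (fun j => w (i.succAbove j)))) W := by
    intro i v
    rw [← B_iota H (θ i) v, hθeq i, hkey i v]
  have hBW : H.B W W ≠ 0 := by
    rw [hW, H.B_gram]; exact gram_det_ne_zero hindep
  have hBWnonneg : 0 ≤ H.B W W := B_self_nonneg H hWmem
  have hnorm : H.norm W ^ 2 = H.B W W := by
    rw [HodgeData.norm]; exact Real.sq_sqrt hBWnonneg
  -- inner products of θ i with the w j
  have hθw : ∀ i j : Fin (q+1), (inner ℝ (θ i) (w j) : ℝ)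
      = if i = j then ((-1:ℝ))^(n-1) * (((-1:ℝ))^(i:ℕ) * H.B W W) else 0 := by
    intro i j
    rw [hinner i (w j)]
    by_cases hij : i = j
    · subst hij
      rw [if_pos rfl]
      congr 1
      have hperm : (Fin.cons (w i) (fun j => w (i.succAbove j)) : Fin (q+1) → E)
          = w ∘ ⇑(i.cycleRange⁻¹ : Equiv.Perm (Fin (q+1))) := by
        funext k
        induction k using Fin.cases with
        | zero => simp [Equiv.Perm.inv_def, Fin.cycleRange_symm_zero]
        | succ j => simp [Equiv.Perm.inv_def, Fin.cycleRange_symm_succ]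
      rw [hperm, AlternatingMap.map_perm, map_inv, Fin.sign_cycleRange, ← hW,
        Int.units_inv_eq_self, Units.smul_def, ← Int.cast_smul_eq_zsmul ℝ,
        LinearMap.map_smul₂, smul_eq_mul]
      congr 1
      push_cast [Units.val_pow_eq_pow_val]
      norm_num
    · rw [if_neg hij]
      obtain ⟨k, hk⟩ := Fin.exists_succAbove_eq (show j ≠ i from fun h => hij h.symm)
      have h0 : (ExteriorAlgebra.ιMulti ℝ (q+1))
          (Fin.cons (w j) (fun l => w (i.succAbove l))) = 0 := by
        apply AlternatingMap.map_eq_zero_of_eq _ _ (i := (0 : Fin (q+1))) (j := k.succ)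
        · rw [Fin.cons_zero, Fin.cons_succ, hk]
        · exact (Fin.succ_ne_zero k).symm
      rw [h0, map_zero, LinearMap.zero_apply, mul_zero]
  -- identify u₀
  have hu' : u₀ = (H.norm W ^ 2)⁻¹ •
      ∑ i : Fin (q+1), (((-1 : ℝ)) ^ (n - ((i : ℕ) + 1)) * lam i) • θ i := by
    have h2 : ExteriorAlgebra.ι ℝ u₀ = ExteriorAlgebra.ι ℝ ((H.norm W ^ 2)⁻¹ •
        ∑ i : Fin (q+1), (((-1 : ℝ)) ^ (n - ((i : ℕ) + 1)) * lam i) • θ i) := by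
      rw [hu₀, map_smul, map_sum]
      simp_rw [map_smul, hθeq]
    exact ((ExteriorAlgebra.ι_inj ℝ u₀ _).mp h2)
  constructor
  · intro j
    have hsum : ∑ i : Fin (q+1), (((-1:ℝ))^(n-((i:ℕ)+1)) * lam i) * (inner ℝ (θ i) (w j) : ℝ)
        = (((-1:ℝ))^(n-((j:ℕ)+1)) * lam j) *
          (((-1:ℝ))^(n-1) * (((-1:ℝ))^(j:ℕ) * H.B W W)) := by
      rw [Finset.sum_eq_single j]
      · rw [hθw j j, if_pos rfl]
      · intro i _ hij
        rw [hθw i j, if_neg hij, mul_zero]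
      · intro h; exact absurd (Finset.mem_univ j) h
    have hj := j.isLt
    have hsign : ((-1:ℝ))^(n-((j:ℕ)+1)) * (((-1:ℝ))^(n-1) * ((-1:ℝ))^(j:ℕ)) = 1 := by
      rw [← pow_add, ← pow_add]
      have harith : (n - ((j:ℕ) + 1)) + ((n-1) + (j:ℕ)) = 2 * (n-1) := by omega
      rw [harith, pow_mul]
      norm_num
    rw [hu', real_inner_smul_left, sum_inner]
    simp_rw [real_inner_smul_left]
    rw [hsum, hnorm]
    calc (H.B W W)⁻¹ * ((((-1:ℝ))^(n-((j:ℕ)+1)) * lam j) *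
          (((-1:ℝ))^(n-1) * (((-1:ℝ))^(j:ℕ) * H.B W W)))
        = (((-1:ℝ))^(n-((j:ℕ)+1)) * (((-1:ℝ))^(n-1) * ((-1:ℝ))^(j:ℕ))) *
          (lam j * ((H.B W W)⁻¹ * H.B W W)) := by ring
    _ = lam j := by rw [hsign, inv_mul_cancel₀ hBW, mul_one, one_mul]
  · rw [hu']
    apply Submodule.smul_mem
    apply Submodule.sum_mem
    intro i _
    apply Submodule.smul_mem
    set K := Submodule.span ℝ (Set.range w) with hK
    have hfd : FiniteDimensional ℝ K := FiniteDimensional.span_of_finite ℝ (Set.finite_range w)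
    rw [← Submodule.orthogonal_orthogonal K]
    rw [Submodule.mem_orthogonal]
    intro v hv
    rw [real_inner_comm, hinner i v, hW, H.B_gram]
    have hzero : (Matrix.of fun a b =>
        (inner ℝ ((Fin.cons v (fun l => w (i.succAbove l)) : Fin (q+1) → E) a) (w b) : ℝ)).det
        = 0 := by
      apply Matrix.det_eq_zero_of_row_eq_zero 0
      intro b
      rw [Matrix.of_apply, Fin.cons_zero, real_inner_comm]
      exact (Submodule.mem_orthogonal K v).mp hv (w b)
        (Submodule.subset_span (Set.mem_range_self b))
    rw [hzero, mul_zero]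
end
end

section
/- Let (M, g) be a smooth oriented n-dimensional Riemannian manifold, U ⊆ M open, k > 0, p > 1, k + p < n − 1, and let I_1, …, I_k, D_1, …, D_p ∈ C^∞(U, ℝ) be such that the gradients ∇_g I_1, …, ∇_g I_k, ∇_g D_1, …, ∇_g D_p are pointwise linearly independent on U. Let h_1, …, h_p ∈ C^∞(U, ℝ). Define Θ_i = ⋆[ (⋀_{j≠i} ∇_g D_j) ∧ (⋀_{l=1}^k ∇_g I_l) ∧ ⋆( (⋀_{j=1}^p ∇_g D_j) ∧ (⋀_{l=1}^k ∇_g I_l) ) ] and X_0 = ‖(⋀ ∇_g D_i) ∧ (⋀ ∇_g I_j)‖^{−2} Σ_{i=1}^p (−1)^{n−i} h_i Θ_i. Then X_0 is a smooth vector field on U satisfying L_{X_0} I_j = 0 for all j ∈ {1,…,k} and L_{X_0} D_i = h_i for all i ∈ {1,…,p}. -/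
noncomputable section

open ExteriorAlgebra Module

namespace Stmt19Aux

variable {E : Type*} [NormedAddCommGroup E] [InnerProductSpace ℝ E] {n : ℕ}

lemma iMulti_cast {a b : ℕ} (h : b = a) (v : Fin a → E) :
    ιMulti ℝ b (v ∘ Fin.cast h) = ιMulti ℝ a v := by
  subst h; congr 1

lemma iMulti_append {a b : ℕ} (v : Fin a → E) (w : Fin b → E) :
    ιMulti ℝ (a + b) (Fin.append v w) = ιMulti ℝ a v * ιMulti ℝ b w := by
  rw [ιMulti_apply, ιMulti_apply, ιMulti_apply]
  rw [show (fun i => ι ℝ (Fin.append v w i))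
      = Fin.append (fun i => ι ℝ (v i)) (fun i => ι ℝ (w i)) from ?_]
  · rw [List.ofFn_fin_append, List.prod_append]
  · funext i
    induction i using Fin.addCases with
    | left i => simp [Fin.append_left]
    | right i => simp [Fin.append_right]

lemma mem_exteriorPower {r : ℕ} (v : Fin r → E) : ιMulti ℝ r v ∈ ⋀[ℝ]^r E :=
  ExteriorAlgebra.ιMulti_range ℝ r (Set.mem_range_self v)

lemma alt_map_det {V N' : Type*} [AddCommGroup V] [Module ℝ V] [AddCommGroup N'] [Module ℝ N']
    {m : ℕ} (b : Basis (Fin m) ℝ V) (f : V [⋀^Fin m]→ₗ[ℝ] N') (v : Fin m → V) :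
    f v = b.det v • f ⇑b := by
  have key : f = (LinearMap.toSpanSingleton ℝ N' (f ⇑b)).compAlternatingMap b.det := by
    apply Basis.ext_alternating b
    intro κ hκ
    have hbij : Function.Bijective κ := Finite.injective_iff_bijective.mp hκ
    set σ : Equiv.Perm (Fin m) := Equiv.ofBijective κ hbij with hσ
    have hb : (fun i => b (κ i)) = ⇑b ∘ σ := rfl
    rw [hb]
    rw [AlternatingMap.map_perm, LinearMap.compAlternatingMap_apply, AlternatingMap.map_perm,
      Basis.det_self]
    rcases Int.units_eq_one_or (Equiv.Perm.sign σ) with h | h <;>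
      simp [h, LinearMap.toSpanSingleton_apply]
  rw [key]
  simp [LinearMap.toSpanSingleton_apply, Basis.det_self]

lemma gram_orthonormal_family {r : ℕ} {u : Fin n → E} (hu : Orthonormal ℝ u)
    {f : Fin r → Fin n} (hf : Function.Injective f) (H : HodgeData E n) :
    H.B (ιMulti ℝ r (u ∘ f)) (ιMulti ℝ r (u ∘ f)) = 1 := by
  rw [H.B_gram]
  have hone : (Matrix.of fun i j => (inner ℝ ((u ∘ f) i) ((u ∘ f) j) : ℝ)) = 1 := by
    ext i j
    simp only [Matrix.of_apply, Function.comp_apply]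
    rw [orthonormal_iff_ite.mp hu]
    simp [Matrix.one_apply, hf.eq_iff]
  rw [hone, Matrix.det_one]

lemma vol_norm (H : HodgeData E n) : H.B H.vol H.vol = 1 := by
  have := gram_orthonormal_family H.e.orthonormal (f := id) Function.injective_id H
  simpa [HodgeData.vol, Function.comp_def] using this

lemma vol_cancel (H : HodgeData E n) {c c' : ℝ} (h : c • H.vol = c' • H.vol) : c = c' := by
  have h2 := congrArg (fun z => H.B z H.vol) h
  simpa [vol_norm H] using h2

lemma key_W [FiniteDimensional ℝ E] (H : HodgeData E n) {m : ℕ} (hm : m ≤ n)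
    (g : Fin m → E) (hg : LinearIndependent ℝ g) :
    0 < H.B (ιMulti ℝ m g) (ιMulti ℝ m g) ∧
    ιMulti ℝ m g * H.star m (ιMulti ℝ m g)
      = H.B (ιMulti ℝ m g) (ιMulti ℝ m g) • H.vol := by
  classical
  have hfr : finrank ℝ E = n := by
    rw [finrank_eq_card_basis H.e.toBasis, Fintype.card_fin]
  have frP : finrank ℝ ↥(Submodule.span ℝ (Set.range g)) = m := by
    rw [finrank_span_eq_card hg, Fintype.card_fin]
  set P := Submodule.span ℝ (Set.range g) with hP
  let u₀ : OrthonormalBasis (Fin m) ℝ P := (stdOrthonormalBasis ℝ P).reindex (finCongr frP)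
  set v : Fin n → E := fun i => if h : (i : ℕ) < m then ((u₀ ⟨i, h⟩ : P) : E) else 0 with hv
  have hvon : Orthonormal ℝ (Set.restrict {i : Fin n | (i : ℕ) < m} v) := by
    rw [orthonormal_iff_ite]
    rintro ⟨i, hi⟩ ⟨j, hj⟩
    have hi' : (i : ℕ) < m := hi
    have hj' : (j : ℕ) < m := hj
    simp only [Set.restrict_apply, hv]
    change inner ℝ (v i) (v j) = _
    simp only [hv]
    rw [dif_pos hi', dif_pos hj', ← Submodule.coe_inner,
      orthonormal_iff_ite.mp u₀.orthonormal]
    simp [Subtype.ext_iff, Fin.ext_iff]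
  obtain ⟨u, hu⟩ := hvon.exists_orthonormalBasis_extension_of_card_eq
    (by rw [hfr, Fintype.card_fin])
  have hmn : m + (n - m) = n := by omega
  set fA : Fin m → Fin n := fun j => Fin.cast hmn (Fin.castAdd (n - m) j) with hfA
  set fB : Fin (n - m) → Fin n := fun j => Fin.cast hmn (Fin.natAdd m j) with hfB
  have hfAval : ∀ j, ((fA j : Fin n) : ℕ) = (j : ℕ) := fun j => rfl
  have hfBval : ∀ j, ((fB j : Fin n) : ℕ) = m + (j : ℕ) := fun j => rfl
  have hfAinj : Function.Injective fA := by
    intro a b hab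
    have h2 := congrArg Fin.val hab
    simp only [hfA, Fin.coe_cast, Fin.coe_castAdd] at h2
    exact Fin.ext h2
  have hfBinj : Function.Injective fB := by
    intro a b hab
    have h2 := congrArg Fin.val hab
    simp only [hfB, Fin.coe_cast, Fin.coe_natAdd] at h2
    exact Fin.ext (by omega)
  have huA : ∀ j : Fin m, u (fA j) = ((u₀ j : P) : E) := by
    intro j
    have hj : ((fA j : Fin n) : ℕ) < m := by rw [hfAval]; exact j.isLt
    rw [hu _ hj]
    simp only [hv, dif_pos hj]
    congr 1
  -- basis of P from g
  set bg : Basis (Fin m) ℝ P := Basis.span hg with hbg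
  set c : ℝ := u₀.toBasis.det ⇑bg with hc
  have hcne : c ≠ 0 := by
    have := u₀.toBasis.isUnit_det bg  -- check name
    exact this.ne_zero
  set uA : Fin m → E := u ∘ fA with huAdef
  set uB : Fin (n - m) → E := u ∘ fB with huBdef
  have hWA : ιMulti ℝ m g = c • ιMulti ℝ m uA := by
    have hexp := alt_map_det u₀.toBasis ((ιMulti ℝ m (M := E)).compLinearMap P.subtype) ⇑bg
    simp only [AlternatingMap.compLinearMap_apply] at hexp
    have h1 : (fun i => P.subtype (bg i)) = g := by
      funext i
      simp only [Submodule.subtype_apply, hbg]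
      exact congrArg Subtype.val (Basis.span_apply hg i)
    have h2 : (fun i => P.subtype (u₀.toBasis i)) = uA := by
      funext i
      simp only [Submodule.subtype_apply, OrthonormalBasis.coe_toBasis, huAdef,
        Function.comp_apply]
      exact (huA i).symm
    rw [h1, h2] at hexp
    exact hexp
  have hvolU : ∀ vf : Fin n → E, ιMulti ℝ n vf = u.toBasis.det vf • ιMulti ℝ n ⇑u := by
    intro vf
    have := alt_map_det u.toBasis (ιMulti ℝ n (M := E)) vf
    simpa [OrthonormalBasis.coe_toBasis] using this
  set d : ℝ := H.e.toBasis.det ⇑u with hd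
  have hdu : ιMulti ℝ n ⇑u = d • H.vol := by
    have := alt_map_det H.e.toBasis (ιMulti ℝ n (M := E)) ⇑u
    simpa [OrthonormalBasis.coe_toBasis, HodgeData.vol] using this
  have hd2 : d * d = 1 := by
    have h1 : H.B (ιMulti ℝ n ⇑u) (ιMulti ℝ n ⇑u) = 1 := by
      have := gram_orthonormal_family u.orthonormal (f := id) Function.injective_id H
      simpa [Function.comp_def] using this
    rw [hdu] at h1
    simpa [vol_norm H, smul_smul] using h1
  have happ : ιMulti ℝ m uA * ιMulti ℝ (n - m) uB = ιMulti ℝ n ⇑u := by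
    rw [← iMulti_append]
    have hT : Fin.append uA uB = ⇑u ∘ Fin.cast hmn := by
      funext z
      induction z using Fin.addCases with
      | left i => rw [Fin.append_left]; rfl
      | right i => rw [Fin.append_right]; rfl
    rw [hT, iMulti_cast]
  have hpair : ∀ ω ∈ ⋀[ℝ]^(n - m) E,
      ιMulti ℝ m g * ω = (c * d * H.B (ιMulti ℝ (n - m) uB) ω) • H.vol := by
    intro ω hω
    rw [← ExteriorAlgebra.ιMulti_span_fixedDegree] at hω
    induction hω using Submodule.span_induction with
    | mem z hz =>
      obtain ⟨vv, rfl⟩ := hz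
      rw [hWA, smul_mul_assoc, ← iMulti_append]
      have hT : Fin.append uA vv = (Fin.append uA vv ∘ Fin.cast hmn.symm) ∘ Fin.cast hmn := by
        funext z; simp
      rw [hT, iMulti_cast, hvolU, hdu]
      set T' : Fin n → E := Fin.append uA vv ∘ Fin.cast hmn.symm with hT'
      rw [smul_smul, smul_smul]
      congr 1
      have hdet : u.toBasis.det T' = H.B (ιMulti ℝ (n - m) uB) (ιMulti ℝ (n - m) vv) := by
        rw [H.B_gram, Basis.det_apply]
        set eqv : Fin n ≃ Fin m ⊕ Fin (n - m) :=
          (finCongr hmn.symm).trans finSumFinEquiv.symm with heqv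
        rw [← Matrix.det_reindex_self eqv (u.toBasis.toMatrix T')]
        have hentry : ∀ (i j : Fin n),
            u.toBasis.toMatrix T' i j = (inner ℝ (u i) (T' j) : ℝ) := by
          intro i j
          rw [Basis.toMatrix_apply, OrthonormalBasis.coe_toBasis_repr_apply,
            OrthonormalBasis.repr_apply_apply]
        have hsymmA : ∀ i : Fin m, eqv.symm (Sum.inl i) = fA i := by
          intro i; rfl
        have hsymmB : ∀ i : Fin (n - m), eqv.symm (Sum.inr i) = fB i := by
          intro i; rfl
        have hTA : ∀ j : Fin m, T' (fA j) = uA j := by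
          intro j
          simp only [hT', Function.comp_apply]
          have : Fin.cast hmn.symm (fA j) = Fin.castAdd (n - m) j := by
            apply Fin.ext; simp [hfA]
          rw [this, Fin.append_left]
        have hTB : ∀ j : Fin (n - m), T' (fB j) = vv j := by
          intro j
          simp only [hT', Function.comp_apply]
          have : Fin.cast hmn.symm (fB j) = Fin.natAdd m j := by
            apply Fin.ext; simp [hfB]
          rw [this, Fin.append_right]
        have hblock : Matrix.reindex eqv eqv (u.toBasis.toMatrix T')
            = Matrix.fromBlocks 1 (Matrix.of fun i j => (inner ℝ (uA i) (vv j) : ℝ)) 0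
                (Matrix.of fun i j => (inner ℝ (uB i) (vv j) : ℝ)) := by
          ext a b
          rcases a with i | i <;> rcases b with j | j <;>
            simp only [Matrix.reindex_apply, Matrix.submatrix_apply, hsymmA, hsymmB,
              hentry, hTA, hTB, Matrix.fromBlocks_apply₁₁, Matrix.fromBlocks_apply₁₂,
              Matrix.fromBlocks_apply₂₁, Matrix.fromBlocks_apply₂₂, Matrix.of_apply]
          · rw [show (inner ℝ (u (fA i)) (uA j) : ℝ) = inner ℝ (u (fA i)) (u (fA j)) from rfl]
            rw [orthonormal_iff_ite.mp u.orthonormal]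
            simp [Matrix.one_apply, hfAinj.eq_iff]
          · rfl
          · rw [show (inner ℝ (u (fB i)) (uA j) : ℝ) = inner ℝ (u (fB i)) (u (fA j)) from rfl]
            rw [orthonormal_iff_ite.mp u.orthonormal]
            have : fB i ≠ fA j := by
              intro hh
              have h2 := congrArg Fin.val hh
              simp only [hfA, hfB, Fin.coe_cast, Fin.coe_castAdd, Fin.coe_natAdd] at h2
              omega
            simp [this, Matrix.zero_apply]
          · rfl
        rw [hblock, Matrix.det_fromBlocks_zero₂₁, Matrix.det_one, one_mul]
      rw [hdet]; ring
    | zero => simp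
    | add x y hx hy ihx ihy =>
      rw [mul_add, ihx, ihy, map_add]
      rw [mul_add, add_smul]
    | smul a x hx ih =>
      rw [mul_smul_comm, ih, map_smul, smul_smul]
      congr 1
      simp only [smul_eq_mul]
      ring
  -- conclusion
  have hWmem : ιMulti ℝ m g ∈ ⋀[ℝ]^m E := mem_exteriorPower g
  set sW := H.star m (ιMulti ℝ m g) with hsW
  have hsWmem : sW ∈ ⋀[ℝ]^(n - m) E := H.star_mem m _ hWmem
  have huBmem : ιMulti ℝ (n - m) uB ∈ ⋀[ℝ]^(n - m) E := mem_exteriorPower uB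
  have h1 : H.B sW sW • H.vol = ιMulti ℝ m g * sW := H.star_eq m _ sW hWmem hsWmem
  have h3 : H.B sW (ιMulti ℝ (n - m) uB) • H.vol = ιMulti ℝ m g * ιMulti ℝ (n - m) uB :=
    H.star_eq m _ _ hWmem huBmem
  have hgramB : H.B (ιMulti ℝ (n - m) uB) (ιMulti ℝ (n - m) uB) = 1 :=
    gram_orthonormal_family u.orthonormal hfBinj H
  have hBsWuB : H.B sW (ιMulti ℝ (n - m) uB) = c * d := by
    apply vol_cancel H
    rw [h3, hpair _ huBmem, hgramB, mul_one]
  have hBss : H.B sW sW = c * c := by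
    apply vol_cancel H
    rw [h1, hpair _ hsWmem]
    congr 1
    rw [H.B_symm (ιMulti ℝ (n - m) uB) sW, hBsWuB]
    calc c * d * (c * d) = c * c * (d * d) := by ring
      _ = c * c := by rw [hd2, mul_one]
  have hgramA : H.B (ιMulti ℝ m uA) (ιMulti ℝ m uA) = 1 :=
    gram_orthonormal_family u.orthonormal hfAinj H
  have hBWW : H.B (ιMulti ℝ m g) (ιMulti ℝ m g) = c * c := by
    rw [hWA, map_smul, map_smul]
    simp only [LinearMap.smul_apply, smul_eq_mul]
    rw [hgramA]; ring
  constructor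
  · rw [hBWW]; exact mul_self_pos.mpr hcne
  · rw [← h1]
    congr 1
    rw [hBWW, hBss]

lemma iMulti_snoc {r : ℕ} (v : Fin r → E) (w : E) :
    ιMulti ℝ (r + 1) (Fin.snoc v w) = ιMulti ℝ r v * ι ℝ w := by
  rw [ιMulti_apply, ιMulti_apply]
  rw [List.ofFn_succ' (fun i => ι ℝ (Fin.snoc v w i))]
  simp [List.prod_concat]

lemma iMulti_cons {r : ℕ} (v : Fin r → E) (w : E) :
    ιMulti ℝ (r + 1) (Fin.cons w v) = ι ℝ w * ιMulti ℝ r v := by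
  rw [ιMulti_apply, ιMulti_apply]
  rw [List.ofFn_succ (f := fun i => ι ℝ (Fin.cons w v i))]
  simp

lemma iMulti_one_eq (v : Fin 1 → E) : ιMulti ℝ 1 v = ι ℝ (v 0) := by
  rw [ιMulti_apply]; simp

lemma mul_mem_exteriorPower {a b : ℕ} {x y : ExteriorAlgebra ℝ E}
    (hx : x ∈ ⋀[ℝ]^a E) (hy : y ∈ ⋀[ℝ]^b E) : x * y ∈ ⋀[ℝ]^(a+b) E := by
  rw [exteriorPower, pow_add]
  exact Submodule.mul_mem_mul hx hy

lemma ι_anticomm {r : ℕ} (w : E) : ∀ y ∈ ⋀[ℝ]^r E,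
    ι ℝ w * y = ((-1 : ℝ)) ^ r • (y * ι ℝ w) := by
  induction r with
  | zero =>
    intro y hy
    rw [exteriorPower, pow_zero] at hy
    obtain ⟨c, rfl⟩ := hy
    simp [Algebra.commutes]
  | succ r ih =>
    intro y hy
    rw [exteriorPower, pow_succ] at hy
    refine Submodule.mul_induction_on hy ?_ ?_
    · rintro a ha bb ⟨u, rfl⟩
      have h1 : ι ℝ w * a = ((-1:ℝ))^r • (a * ι ℝ w) := ih a ha
      have h2 : ι ℝ w * ι ℝ u = -(ι ℝ u * ι ℝ w) := by
        have := ExteriorAlgebra.ι_add_mul_swap (R := ℝ) w u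
        linear_combination (norm := noncomm_ring) this
      calc ι ℝ w * (a * ι ℝ u) = (ι ℝ w * a) * ι ℝ u := by rw [mul_assoc]
        _ = ((-1:ℝ))^r • (a * ι ℝ w * ι ℝ u) := by rw [h1, smul_mul_assoc]
        _ = ((-1:ℝ))^r • (a * (ι ℝ w * ι ℝ u)) := by rw [mul_assoc]
        _ = ((-1:ℝ))^r • (a * (-(ι ℝ u * ι ℝ w))) := by rw [h2]
        _ = ((-1:ℝ))^(r+1) • (a * ι ℝ u * ι ℝ w) := by
            rw [mul_neg, smul_neg, pow_succ, mul_comm (((-1:ℝ))^r) (-1), ← smul_smul]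
            simp [mul_assoc]
    · intro a b ha hb
      rw [mul_add, ha, hb, add_mul, smul_add]

lemma main_pointwise [FiniteDimensional ℝ E] {n k q : ℕ} (hn : k + q + 3 < n)
    (H : HodgeData E n) (gI : Fin k → E) (gD : Fin (q + 2) → E)
    (hpos : 0 < H.B (ιMulti ℝ (q + 2 + k) (Fin.append gD gI))
      (ιMulti ℝ (q + 2 + k) (Fin.append gD gI)))
    (hprod : ιMulti ℝ (q + 2 + k) (Fin.append gD gI)
        * H.star (q + 2 + k) (ιMulti ℝ (q + 2 + k) (Fin.append gD gI))
      = H.B (ιMulti ℝ (q + 2 + k) (Fin.append gD gI))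
          (ιMulti ℝ (q + 2 + k) (Fin.append gD gI)) • H.vol)
    (hval : Fin (q + 2) → ℝ) (X : E)
    (hX : ι ℝ X = (H.B (ιMulti ℝ (q + 2 + k) (Fin.append gD gI))
        (ιMulti ℝ (q + 2 + k) (Fin.append gD gI)))⁻¹ •
      ∑ i : Fin (q + 2), (((-1 : ℝ)) ^ (n - ((i : ℕ) + 1)) * hval i) •
        H.star (n - 1)
          (ιMulti ℝ (q + 1 + k) (Fin.append (fun j => gD (i.succAbove j)) gI)
            * H.star (q + 2 + k) (ιMulti ℝ (q + 2 + k) (Fin.append gD gI)))) :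
    (∀ j, (inner ℝ X (gI j) : ℝ) = 0) ∧ ∀ i, (inner ℝ X (gD i) : ℝ) = hval i := by
  classical
  set W : ExteriorAlgebra ℝ E := ιMulti ℝ (q + 2 + k) (Fin.append gD gI) with hWdef
  set sW : ExteriorAlgebra ℝ E := H.star (q + 2 + k) W with hsWdef
  set r : ℝ := H.B W W with hrdef
  set t : Fin (q + 2) → Fin (q + 1 + k) → E :=
    fun i => Fin.append (fun j => gD (i.succAbove j)) gI with htdef
  set A : Fin (q + 2) → ExteriorAlgebra ℝ E := fun i => ιMulti ℝ (q + 1 + k) (t i) with hAdef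
  set Θ : Fin (q + 2) → ExteriorAlgebra ℝ E := fun i => H.star (n - 1) (A i * sW) with hΘdef
  have hWmem : W ∈ ⋀[ℝ]^(q + 2 + k) E := mem_exteriorPower _
  have hsWmem : sW ∈ ⋀[ℝ]^(n - (q + 2 + k)) E := H.star_mem _ _ hWmem
  -- the fundamental computation
  have hcompute : ∀ (i : Fin (q + 2)) (w : E),
      H.B (Θ i) (ι ℝ w) • H.vol
        = ((-1 : ℝ)) ^ (n - (q + 2 + k)) •
            (ιMulti ℝ (q + 1 + k + 1) (Fin.snoc (t i) w) * sW) := by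
    intro i w
    have hAmem : A i ∈ ⋀[ℝ]^(q + 1 + k) E := mem_exteriorPower _
    have hνmem : A i * sW ∈ ⋀[ℝ]^((q + 1 + k) + (n - (q + 2 + k))) E :=
      mul_mem_exteriorPower hAmem hsWmem
    have hdeg : (q + 1 + k) + (n - (q + 2 + k)) = n - 1 := by omega
    rw [hdeg] at hνmem
    have hωmem : ι ℝ w ∈ ⋀[ℝ]^(n - (n - 1)) E := by
      have h1 : n - (n - 1) = 1 := by omega
      rw [h1, ← iMulti_one_eq (fun _ => w)]
      exact mem_exteriorPower _
    have hse := H.star_eq (n - 1) (A i * sW) (ι ℝ w) hνmem hωmem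
    rw [show H.star (n - 1) (A i * sW) = Θ i from rfl,
      show ιMulti ℝ n ⇑H.e = H.vol from rfl] at hse
    rw [hse]
    have hsign : ((-1 : ℝ)) ^ (n - (q + 2 + k)) * ((-1 : ℝ)) ^ (n - (q + 2 + k)) = 1 := by
      rw [← pow_add]
      exact Even.neg_one_pow ⟨n - (q + 2 + k), by ring⟩
    have hanti := ι_anticomm (r := n - (q + 2 + k)) w sW hsWmem
    have h5 : sW * ι ℝ w = ((-1 : ℝ)) ^ (n - (q + 2 + k)) • (ι ℝ w * sW) := by
      rw [hanti, smul_smul, hsign, one_smul]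
    calc A i * sW * ι ℝ w = A i * (sW * ι ℝ w) := by rw [mul_assoc]
      _ = ((-1 : ℝ)) ^ (n - (q + 2 + k)) • (A i * (ι ℝ w * sW)) := by
          rw [h5, mul_smul_comm]
      _ = ((-1 : ℝ)) ^ (n - (q + 2 + k)) • (A i * ι ℝ w * sW) := by rw [mul_assoc]
      _ = ((-1 : ℝ)) ^ (n - (q + 2 + k)) •
            (ιMulti ℝ (q + 1 + k + 1) (Fin.snoc (t i) w) * sW) := by
          rw [iMulti_snoc]
  -- vanishing terms
  have hzero : ∀ (i : Fin (q + 2)) (w : E) (l : Fin (q + 1 + k)), t i l = w →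
      H.B (Θ i) (ι ℝ w) = 0 := by
    intro i w l hl
    have hz : ιMulti ℝ (q + 1 + k + 1) (Fin.snoc (t i) w) = 0 := by
      apply AlternatingMap.map_eq_zero_of_eq _ _
        (i := Fin.castSucc l) (j := Fin.last (q + 1 + k))
      · rw [Fin.snoc_castSucc, Fin.snoc_last, hl]
      · exact (Fin.castSucc_lt_last l).ne
    apply vol_cancel H (c' := 0)
    rw [hcompute, hz, zero_mul, smul_zero, zero_smul]
  -- the diagonal term
  have hD : ∀ i : Fin (q + 2),
      H.B (Θ i) (ι ℝ (gD i))
        = ((-1 : ℝ)) ^ (n - (q + 2 + k)) * ((-1 : ℝ)) ^ (q + 1 + k)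
            * ((-1 : ℝ)) ^ (i : ℕ) * r := by
    intro i
    apply vol_cancel H
    rw [hcompute]
    have hc2 : q + 2 + k = (q + 1 + k) + 1 := by omega
    set π : Equiv.Perm (Fin (q + 2 + k)) :=
      finSumFinEquiv.permCongr
        (Equiv.sumCongr (Equiv.symm i.cycleRange) (Equiv.refl (Fin k))) with hπdef
    have hπl : ∀ a : Fin (q + 2), π (Fin.castAdd k a)
        = Fin.castAdd k ((Equiv.symm i.cycleRange) a) := by
      intro a
      rw [hπdef,
        show (Fin.castAdd k a : Fin (q + 2 + k)) = finSumFinEquiv (Sum.inl a) from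
          (finSumFinEquiv_apply_left a).symm,
        Equiv.permCongr_apply, Equiv.symm_apply_apply]
      simp
    have hπr : ∀ b : Fin k, π (Fin.natAdd (q + 2) b) = Fin.natAdd (q + 2) b := by
      intro b
      rw [hπdef,
        show (Fin.natAdd (q + 2) b : Fin (q + 2 + k)) = finSumFinEquiv (Sum.inr b) from
          (finSumFinEquiv_apply_right b).symm,
        Equiv.permCongr_apply, Equiv.symm_apply_apply]
      simp
    have hperm : Fin.append gD gI ∘ ⇑π = Fin.cons (gD i) (t i) ∘ Fin.cast hc2 := by
      funext z
      induction z using Fin.addCases with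
      | left a =>
        rw [Function.comp_apply, Function.comp_apply, hπl, Fin.append_left]
        induction a using Fin.cases with
        | zero =>
          rw [Fin.cycleRange_symm_zero]
          have hidx : Fin.cast hc2 (Fin.castAdd k (0 : Fin (q + 2))) =
              (0 : Fin ((q + 1 + k) + 1)) := by
            apply Fin.ext; simp
          rw [hidx, Fin.cons_zero]
        | succ a' =>
          rw [Fin.cycleRange_symm_succ]
          have hidx : Fin.cast hc2 (Fin.castAdd k a'.succ) =
              Fin.succ (Fin.castAdd k a' : Fin (q + 1 + k)) := by
            apply Fin.ext; simp
          rw [hidx, Fin.cons_succ]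
          rw [show t i (Fin.castAdd k a') = gD (i.succAbove a') from ?_]
          rw [htdef]
          exact Fin.append_left _ _ a'
      | right b =>
        rw [Function.comp_apply, Function.comp_apply, hπr, Fin.append_right]
        have hidx : Fin.cast hc2 (Fin.natAdd (q + 2) b) =
            Fin.succ (Fin.natAdd (q + 1) b : Fin (q + 1 + k)) := by
          apply Fin.ext; simp; omega
        rw [hidx, Fin.cons_succ]
        rw [show t i (Fin.natAdd (q + 1) b) = gI b from ?_]
        rw [htdef]
        exact Fin.append_right _ _ b
    have hsignπ : Equiv.Perm.sign π = (-1 : ℤˣ) ^ (i : ℕ) := by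
      rw [hπdef, Equiv.Perm.sign_permCongr, Equiv.Perm.sign_sumCongr]
      rw [show Equiv.symm i.cycleRange = (i.cycleRange)⁻¹ from rfl, Equiv.Perm.sign_inv,
        Fin.sign_cycleRange]
      simp
    have hconsW : ιMulti ℝ ((q + 1 + k) + 1) (Fin.cons (gD i) (t i))
        = ((-1 : ℝ)) ^ (i : ℕ) • W := by
      have h7 : ιMulti ℝ (q + 2 + k) (Fin.append gD gI ∘ ⇑π)
          = Equiv.Perm.sign π • W := by
        rw [hWdef]; exact AlternatingMap.map_perm _ _ π
      rw [hperm] at h7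
      rw [iMulti_cast hc2] at h7
      rw [h7, hsignπ]
      rcases Nat.even_or_odd (i : ℕ) with hpar | hpar
      · rw [hpar.neg_one_pow, Even.neg_one_pow (by exact_mod_cast hpar)]
        simp
      · rw [hpar.neg_one_pow, Odd.neg_one_pow (by exact_mod_cast hpar)]
        simp [Units.smul_def]
    have hsign2 : ((-1 : ℝ)) ^ (q + 1 + k) * ((-1 : ℝ)) ^ (q + 1 + k) = 1 := by
      rw [← pow_add]; exact Even.neg_one_pow ⟨q + 1 + k, by ring⟩
    have hAmem : A i ∈ ⋀[ℝ]^(q + 1 + k) E := mem_exteriorPower _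
    have hanti2 := ι_anticomm (r := q + 1 + k) (gD i) (A i) hAmem
    have hsnoc : ιMulti ℝ (q + 1 + k + 1) (Fin.snoc (t i) (gD i))
        = (((-1 : ℝ)) ^ (q + 1 + k) * ((-1 : ℝ)) ^ (i : ℕ)) • W := by
      rw [iMulti_snoc]
      have h8 : A i * ι ℝ (gD i) = ((-1 : ℝ)) ^ (q + 1 + k) • (ι ℝ (gD i) * A i) := by
        rw [hanti2, smul_smul, hsign2, one_smul]
      rw [h8, ← iMulti_cons, hconsW, smul_smul]
    rw [hsnoc, smul_mul_assoc, hprod, smul_smul, smul_smul]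
    congr 1
    ring
  -- inner ℝ products via B
  have hinner : ∀ y w : E, (inner ℝ y w : ℝ) = H.B (ι ℝ y) (ι ℝ w) := by
    intro y w
    rw [← iMulti_one_eq (fun _ : Fin 1 => y), ← iMulti_one_eq (fun _ : Fin 1 => w), H.B_gram]
    rw [Matrix.det_fin_one]
    rfl
  have hexpand : ∀ w : E, (inner ℝ X w : ℝ)
      = r⁻¹ * ∑ i : Fin (q + 2),
          (((-1 : ℝ)) ^ (n - ((i : ℕ) + 1)) * hval i) * H.B (Θ i) (ι ℝ w) := by
    intro w
    rw [hinner, hX, map_smul, map_sum]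
    simp only [LinearMap.smul_apply, LinearMap.coe_sum, Finset.sum_apply, map_smul,
      smul_eq_mul]
    try rw [Finset.mul_sum]
  constructor
  · intro j
    rw [hexpand]
    have : ∀ i : Fin (q + 2), H.B (Θ i) (ι ℝ (gI j)) = 0 := by
      intro i
      apply hzero i (gI j) (Fin.natAdd (q + 1) j)
      rw [htdef]
      exact Fin.append_right _ _ j
    simp [this]
  · intro i₀
    rw [hexpand]
    rw [Finset.sum_eq_single i₀]
    · rw [hD i₀]
      have hsigns : ((-1 : ℝ)) ^ (n - ((i₀ : ℕ) + 1)) * (((-1 : ℝ)) ^ (n - (q + 2 + k))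
          * ((-1 : ℝ)) ^ (q + 1 + k) * ((-1 : ℝ)) ^ (i₀ : ℕ)) = 1 := by
        rw [← pow_add, ← pow_add, ← pow_add]
        apply Even.neg_one_pow
        refine ⟨n - 1, ?_⟩
        have h9 : (i₀ : ℕ) < q + 2 := i₀.isLt
        omega
      have hrne : r ≠ 0 := ne_of_gt hpos
      field_simp
      calc _
          = (((-1 : ℝ)) ^ (n - ((i₀ : ℕ) + 1)) * (((-1 : ℝ)) ^ (n - (q + 2 + k))
              * ((-1 : ℝ)) ^ (q + 1 + k) * ((-1 : ℝ)) ^ (i₀ : ℕ))) * hval i₀ := by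
            ring
        _ = hval i₀ := by rw [hsigns, one_mul]
    · intro i _ hne
      obtain ⟨j₀, hj₀⟩ := Fin.exists_succAbove_eq (Ne.symm hne)
      rw [hzero i (gD i₀) (Fin.castAdd k j₀) ?_, mul_zero]
      rw [htdef]
      show Fin.append (fun j => gD (i.succAbove j)) gI (Fin.castAdd k j₀) = gD i₀
      rw [Fin.append_left, hj₀]
    · intro habs
      exact absurd (Finset.mem_univ i₀) habs

lemma iMulti_expand {N r : ℕ} (b : Fin N → E) (c : Fin r → Fin N → ℝ) :
    ιMulti ℝ r (fun j => ∑ l : Fin N, c j l • b l)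
      = ∑ κ ∈ Fintype.piFinset (fun _ : Fin r => (Finset.univ : Finset (Fin N))),
          (∏ j, c j (κ j)) • ιMulti ℝ r (b ∘ κ) := by
  classical
  have h1 := MultilinearMap.map_sum_finset
    (ExteriorAlgebra.ιMulti ℝ r (M := E)).toMultilinearMap
    (fun j l => c j l • b l) (fun _ => (Finset.univ : Finset (Fin N)))
  simp only [AlternatingMap.coe_multilinearMap] at h1
  rw [h1]
  refine Finset.sum_congr rfl fun κ _ => ?_
  have h2 := MultilinearMap.map_smul_univ
    (ExteriorAlgebra.ιMulti ℝ r (M := E)).toMultilinearMap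
    (fun j => c j (κ j)) (fun j => b (κ j))
  simp only [AlternatingMap.coe_multilinearMap] at h2
  rw [h2]
  rfl

lemma contDiffOn_finprod {ι : Type*} {U : Set E} (s : Finset ι) (f : ι → E → ℝ)
    (hf : ∀ i ∈ s, ContDiffOn ℝ (⊤ : ℕ∞) (f i) U) :
    ContDiffOn ℝ (⊤ : ℕ∞) (fun x => ∏ i ∈ s, f i x) U := by
  classical
  induction s using Finset.induction_on with
  | empty => simpa using contDiffOn_const
  | insert _ _ hnotmem ih =>
    rename_i a s2
    have : (fun x => ∏ i ∈ insert a s2, f i x) = fun x => f a x * ∏ i ∈ s2, f i x := by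
      funext x; rw [Finset.prod_insert hnotmem]
    rw [this]
    exact (hf a (Finset.mem_insert_self a s2)).mul
      (ih fun i hi => hf i (Finset.mem_insert_of_mem hi))

end Stmt19Aux

open Stmt19Aux

/-- On an open subset U of an oriented Riemannian manifold (here a finite-dimensional
inner ℝ product space with its flat metric), the vector field X₀ built from the gradients
of I_1,…,I_k, D_1,…,D_p via the Hodge star formula is smooth on U, conserves each I_j
(L_{X₀} I_j = 0) and dissipates each D_i with rate h_i (L_{X₀} D_i = h_i).
Here p = q + 2 > 1, k > 0 and k + p < n − 1. -/
theorem stmt19 {E : Type*} [NormedAddCommGroup E] [InnerProductSpace ℝ E]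
    [FiniteDimensional ℝ E] (n k q : ℕ) (hk : 0 < k) (hn : k + q + 3 < n)
    (H : HodgeData E n) (U : Set E) (hU : IsOpen U)
    (I : Fin k → E → ℝ) (D : Fin (q + 2) → E → ℝ) (h : Fin (q + 2) → E → ℝ)
    (hI : ∀ j, ContDiffOn ℝ (⊤ : ℕ∞) (I j) U) (hD : ∀ i, ContDiffOn ℝ (⊤ : ℕ∞) (D i) U)
    (hh : ∀ i, ContDiffOn ℝ (⊤ : ℕ∞) (h i) U) (hhne : ∀ i, h i ≠ 0)
    (hind : ∀ x ∈ U, LinearIndependent ℝ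
      (Fin.append (fun j => gradient (I j) x) (fun i => gradient (D i) x)))
    (W : E → ExteriorAlgebra ℝ E)
    (hW : ∀ x, W x = ExteriorAlgebra.ιMulti ℝ (q + 2 + k)
      (Fin.append (fun i => gradient (D i) x) (fun j => gradient (I j) x)))
    (Θ : Fin (q + 2) → E → ExteriorAlgebra ℝ E)
    (hΘ : ∀ i x, Θ i x = H.star (n - 1)
      (ExteriorAlgebra.ιMulti ℝ (q + 1 + k)
          (Fin.append (fun j => gradient (D (i.succAbove j)) x)
            (fun l => gradient (I l) x))
        * H.star (q + 2 + k) (W x)))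
    (X₀ : E → E)
    (hX₀ : ∀ x ∈ U, ExteriorAlgebra.ι ℝ (X₀ x) = (H.norm (W x) ^ 2)⁻¹ •
      ∑ i : Fin (q + 2), (((-1 : ℝ)) ^ (n - ((i : ℕ) + 1)) * h i x) • Θ i x) :
    ContDiffOn ℝ (⊤ : ℕ∞) X₀ U ∧
      ∀ x ∈ U,
        (∀ j, (inner ℝ (X₀ x) (gradient (I j) x) : ℝ) = 0) ∧
        ∀ i, (inner ℝ (X₀ x) (gradient (D i) x) : ℝ) = h i x := by
  classical
  -- the combined gradient tuple
  set G : E → Fin (q + 2 + k) → E := fun x =>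
    Fin.append (fun i => gradient (D i) x) (fun j => gradient (I j) x) with hG
  -- linear independence of the reordered tuple
  have hGind : ∀ x ∈ U, LinearIndependent ℝ (G x) := by
    intro x hx
    have h0 := hind x hx
    set τ : Fin (q + 2 + k) ≃ Fin (k + (q + 2)) :=
      finSumFinEquiv.symm.trans ((Equiv.sumComm (Fin (q + 2)) (Fin k)).trans
        finSumFinEquiv) with hτ
    have hcomp : G x = (Fin.append (fun j => gradient (I j) x)
        (fun i => gradient (D i) x)) ∘ ⇑τ := by
      funext z
      induction z using Fin.addCases with
      | left a =>
        have hτa : τ (Fin.castAdd k a) = Fin.natAdd k a := by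
          rw [hτ]; simp
        rw [Function.comp_apply, hτa, Fin.append_right, hG]
        exact Fin.append_left _ _ a
      | right b =>
        have hτb : τ (Fin.natAdd (q + 2) b) = Fin.castAdd (q + 2) b := by
          rw [hτ]; simp
        rw [Function.comp_apply, hτb, Fin.append_left, hG]
        exact Fin.append_right _ _ b
    rw [hcomp]
    exact h0.comp ⇑τ τ.injective
  have hm : q + 2 + k ≤ n := by omega
  have hkey : ∀ x ∈ U,
      0 < H.B (ιMulti ℝ (q + 2 + k) (G x)) (ιMulti ℝ (q + 2 + k) (G x)) ∧
      ιMulti ℝ (q + 2 + k) (G x) * H.star (q + 2 + k) (ιMulti ℝ (q + 2 + k) (G x))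
        = H.B (ιMulti ℝ (q + 2 + k) (G x)) (ιMulti ℝ (q + 2 + k) (G x)) • H.vol :=
    fun x hx => key_W H hm (G x) (hGind x hx)
  have hnormsq : ∀ x ∈ U, (H.norm (W x)) ^ 2
      = H.B (ιMulti ℝ (q + 2 + k) (G x)) (ιMulti ℝ (q + 2 + k) (G x)) := by
    intro x hx
    rw [hW x, show HodgeData.norm H _ = Real.sqrt (H.B (ιMulti ℝ (q + 2 + k) (G x))
      (ιMulti ℝ (q + 2 + k) (G x))) from rfl]
    exact Real.sq_sqrt (hkey x hx).1.le
  -- pointwise identities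
  have hpointwise : ∀ x ∈ U,
      (∀ j, (inner ℝ (X₀ x) (gradient (I j) x) : ℝ) = 0) ∧
      ∀ i, (inner ℝ (X₀ x) (gradient (D i) x) : ℝ) = h i x := by
    intro x hx
    have hXarg : ExteriorAlgebra.ι ℝ (X₀ x)
        = (H.B (ιMulti ℝ (q + 2 + k) (Fin.append (fun i => gradient (D i) x)
              (fun j => gradient (I j) x)))
            (ιMulti ℝ (q + 2 + k) (Fin.append (fun i => gradient (D i) x)
              (fun j => gradient (I j) x))))⁻¹ •
          ∑ i : Fin (q + 2), (((-1 : ℝ)) ^ (n - ((i : ℕ) + 1)) * h i x) •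
            H.star (n - 1)
              (ιMulti ℝ (q + 1 + k) (Fin.append (fun j => gradient (D (i.succAbove j)) x)
                  (fun l => gradient (I l) x))
                * H.star (q + 2 + k) (ιMulti ℝ (q + 2 + k)
                    (Fin.append (fun i => gradient (D i) x) (fun j => gradient (I j) x)))) := by
      rw [hX₀ x hx, hnormsq x hx]
      congr 1
      refine Finset.sum_congr rfl fun i _ => ?_
      rw [hΘ i x, hW x]
    exact main_pointwise hn H (fun j => gradient (I j) x) (fun i => gradient (D i) x)
      (hkey x hx).1 (hkey x hx).2 (fun i => h i x) (X₀ x) hXarg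
  refine ⟨?_, hpointwise⟩
  -- ############ smoothness ############
  -- gradient smoothness
  have hgrad_eq : ∀ (F : E → ℝ) (x : E),
      gradient F x = ∑ l : Fin n, (fderiv ℝ F x (H.e l)) • H.e l := by
    intro F x
    conv_lhs => rw [← H.e.sum_repr (gradient F x)]
    refine Finset.sum_congr rfl fun l _ => ?_
    congr 1
    rw [OrthonormalBasis.repr_apply_apply, real_inner_comm]
    exact InnerProductSpace.toDual_symm_apply
  have hgradsm : ∀ (F : E → ℝ), ContDiffOn ℝ (⊤ : ℕ∞) F U →
      ContDiffOn ℝ (⊤ : ℕ∞) (fun x => gradient F x) U := by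
    intro F hF
    have h1 : ContDiffOn ℝ (⊤ : ℕ∞) (fderiv ℝ F) U := hF.fderiv_of_isOpen hU (by simp)
    have h2 : ContDiffOn ℝ (⊤ : ℕ∞) (fun x => ∑ l : Fin n, (fderiv ℝ F x (H.e l)) • H.e l) U := by
      apply ContDiffOn.sum
      intro l _
      exact ContDiffOn.smul
        ((ContinuousLinearMap.apply ℝ ℝ (H.e l)).contDiff.comp_contDiffOn h1)
        contDiffOn_const
    exact h2.congr fun x _ => hgrad_eq F x
  have hGsm : ∀ j, ContDiffOn ℝ (⊤ : ℕ∞) (fun x => G x j) U := by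
    intro j
    induction j using Fin.addCases with
    | left i =>
      have : (fun x => G x (Fin.castAdd k i)) = fun x => gradient (D i) x := by
        funext x; rw [hG]; exact Fin.append_left _ _ i
      rw [this]; exact hgradsm (D i) (hD i)
    | right b =>
      have : (fun x => G x (Fin.natAdd (q + 2) b)) = fun x => gradient (I b) x := by
        funext x; rw [hG]; exact Fin.append_right _ _ b
      rw [this]; exact hgradsm (I b) (hI b)
  -- coordinates
  set a : E → Fin (q + 2 + k) → Fin n → ℝ := fun x j l => inner ℝ (H.e l) (G x j) with ha
  have hasm : ∀ j l, ContDiffOn ℝ (⊤ : ℕ∞) (fun x => a x j l) U := by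
    intro j l
    have : (fun x => a x j l) = fun x => (innerSL ℝ (H.e l)) (G x j) := rfl
    rw [this]
    exact (innerSL ℝ (H.e l)).contDiff.comp_contDiffOn (hGsm j)
  have hGexp : ∀ x j, G x j = ∑ l : Fin n, a x j l • H.e l := by
    intro x j
    conv_lhs => rw [← H.e.sum_repr (G x j)]
    refine Finset.sum_congr rfl fun l _ => ?_
    rw [OrthonormalBasis.repr_apply_apply]
  -- index sets and constants
  set K : Finset (Fin (q + 2 + k) → Fin n) :=
    Fintype.piFinset (fun _ => (Finset.univ : Finset (Fin n))) with hK
  set K' : Finset (Fin (q + 1 + k) → Fin n) :=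
    Fintype.piFinset (fun _ => (Finset.univ : Finset (Fin n))) with hK'
  set c : E → (Fin (q + 2 + k) → Fin n) → ℝ := fun x κ => ∏ j, a x j (κ j) with hc
  set embi : Fin (q + 2) → Fin (q + 1 + k) → Fin (q + 2 + k) := fun i =>
    Fin.append (fun j' : Fin (q + 1) => Fin.castAdd k (i.succAbove j'))
      (fun b : Fin k => Fin.natAdd (q + 2) b) with hembi
  set c' : Fin (q + 2) → E → (Fin (q + 1 + k) → Fin n) → ℝ :=
    fun i x κ' => ∏ j, a x (embi i j) (κ' j) with hc'
  set Ek : (Fin (q + 2 + k) → Fin n) → ExteriorAlgebra ℝ E :=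
    fun κ => ιMulti ℝ (q + 2 + k) (⇑H.e ∘ κ) with hEk
  set Ek' : (Fin (q + 1 + k) → Fin n) → ExteriorAlgebra ℝ E :=
    fun κ => ιMulti ℝ (q + 1 + k) (⇑H.e ∘ κ) with hEk'
  set V : (Fin (q + 1 + k) → Fin n) → (Fin (q + 2 + k) → Fin n) → E :=
    fun κ' κ => ExteriorAlgebra.ιInv
      (H.star (n - 1) (Ek' κ' * H.star (q + 2 + k) (Ek κ))) with hV
  -- expansions
  have hWexp : ∀ x, ιMulti ℝ (q + 2 + k) (G x) = ∑ κ ∈ K, c x κ • Ek κ := by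
    intro x
    rw [show G x = (fun j => ∑ l : Fin n, a x j l • H.e l) from funext (hGexp x)]
    exact iMulti_expand ⇑H.e (a x)
  have htemb : ∀ x (i : Fin (q + 2)),
      (Fin.append (fun j => gradient (D (i.succAbove j)) x)
        (fun l => gradient (I l) x)) = fun j => G x (embi i j) := by
    intro x i
    funext z
    induction z using Fin.addCases with
    | left j' =>
      rw [Fin.append_left]
      have h2 : embi i (Fin.castAdd k j') = Fin.castAdd k (i.succAbove j') :=
        Fin.append_left _ _ j'
      rw [h2]
      simp only [hG]
      exact (Fin.append_left (fun i => gradient (D i) x)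
        (fun j => gradient (I j) x) (i.succAbove j')).symm
    | right b =>
      rw [Fin.append_right]
      have h2 : embi i (Fin.natAdd (q + 1) b) = Fin.natAdd (q + 2) b :=
        Fin.append_right _ _ b
      rw [h2]
      simp only [hG]
      exact (Fin.append_right (fun i => gradient (D i) x)
        (fun j => gradient (I j) x) b).symm
  have hAexp : ∀ x (i : Fin (q + 2)),
      ιMulti ℝ (q + 1 + k) (Fin.append (fun j => gradient (D (i.succAbove j)) x)
        (fun l => gradient (I l) x)) = ∑ κ' ∈ K', c' i x κ' • Ek' κ' := by
    intro x i
    rw [htemb x i]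
    rw [show (fun j => G x (embi i j)) = (fun j => ∑ l : Fin n, a x (embi i j) l • H.e l)
      from funext fun j => hGexp x (embi i j)]
    exact iMulti_expand ⇑H.e (fun j => a x (embi i j))
  -- scalar R
  set R : E → ℝ := fun x => ∑ κ ∈ K, ∑ lam ∈ K, (c x κ * c x lam) * H.B (Ek κ) (Ek lam)
    with hR
  have hReq : ∀ x, H.B (ιMulti ℝ (q + 2 + k) (G x)) (ιMulti ℝ (q + 2 + k) (G x)) = R x := by
    intro x
    rw [hWexp x, hR, LinearMap.map_sum₂]
    refine Finset.sum_congr rfl fun κ _ => ?_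
    rw [map_sum]
    refine Finset.sum_congr rfl fun lam _ => ?_
    rw [LinearMap.map_smul₂, map_smul, smul_eq_mul, smul_eq_mul]
    ring
  -- the master formula
  have hmaster : ∀ x ∈ U, X₀ x = (R x)⁻¹ •
      ∑ i : Fin (q + 2), ∑ κ' ∈ K', ∑ κ ∈ K,
        ((((-1 : ℝ)) ^ (n - ((i : ℕ) + 1)) * h i x) * (c' i x κ' * c x κ)) • V κ' κ := by
    intro x hx
    have h0 := hX₀ x hx
    have h1 : X₀ x = ExteriorAlgebra.ιInv (ExteriorAlgebra.ι ℝ (X₀ x)) :=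
      (ExteriorAlgebra.ι_leftInverse (X₀ x)).symm
    rw [h1, h0, hnormsq x hx, hReq x, map_smul, map_sum]
    congr 1
    refine Finset.sum_congr rfl fun i _ => ?_
    rw [map_smul, hΘ i x, hW x]
    have hWG : (Fin.append (fun i => gradient (D i) x) (fun j => gradient (I j) x)) = G x :=
      rfl
    rw [hWG, hAexp x i, hWexp x]
    -- expand the product
    rw [map_sum (H.star (q + 2 + k))]
    rw [Finset.sum_mul_sum]
    have hterm : ∀ (κ' : Fin (q + 1 + k) → Fin n) (κ : Fin (q + 2 + k) → Fin n),
        (c' i x κ' • Ek' κ') * (H.star (q + 2 + k)) (c x κ • Ek κ)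
          = (c' i x κ' * c x κ) • (Ek' κ' * H.star (q + 2 + k) (Ek κ)) := by
      intro κ' κ
      rw [map_smul]
      rw [smul_mul_assoc, mul_smul_comm, smul_smul]
    simp only [hterm]
    rw [map_sum (H.star (n - 1)), map_sum ExteriorAlgebra.ιInv, Finset.smul_sum]
    refine Finset.sum_congr rfl fun κ' _ => ?_
    rw [map_sum (H.star (n - 1)), map_sum ExteriorAlgebra.ιInv, Finset.smul_sum]
    refine Finset.sum_congr rfl fun κ _ => ?_
    rw [map_smul, map_smul, smul_smul]
  -- smoothness of all ingredients
  have hcsm : ∀ κ, ContDiffOn ℝ (⊤ : ℕ∞) (fun x => c x κ) U := by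
    intro κ
    exact contDiffOn_finprod Finset.univ (fun j x => a x j (κ j))
      (fun j _ => hasm j (κ j))
  have hc'sm : ∀ i κ', ContDiffOn ℝ (⊤ : ℕ∞) (fun x => c' i x κ') U := by
    intro i κ'
    exact contDiffOn_finprod Finset.univ (fun j x => a x (embi i j) (κ' j))
      (fun j _ => hasm (embi i j) (κ' j))
  have hRsm : ContDiffOn ℝ (⊤ : ℕ∞) R U := by
    apply ContDiffOn.sum; intro κ _
    apply ContDiffOn.sum; intro lam _
    exact (((hcsm κ).mul (hcsm lam)).mul contDiffOn_const)
  have hRne : ∀ x ∈ U, R x ≠ 0 := by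
    intro x hx
    rw [← hReq x]
    exact ne_of_gt (hkey x hx).1
  have hsmooth : ContDiffOn ℝ (⊤ : ℕ∞) (fun x => (R x)⁻¹ •
      ∑ i : Fin (q + 2), ∑ κ' ∈ K', ∑ κ ∈ K,
        ((((-1 : ℝ)) ^ (n - ((i : ℕ) + 1)) * h i x) * (c' i x κ' * c x κ)) • V κ' κ) U := by
    apply ContDiffOn.smul (hRsm.inv hRne)
    apply ContDiffOn.sum; intro i _
    apply ContDiffOn.sum; intro κ' _
    apply ContDiffOn.sum; intro κ _
    apply ContDiffOn.smul _ contDiffOn_const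
    exact ((contDiffOn_const.mul (hh i)).mul ((hc'sm i κ').mul (hcsm κ)))
  exact hsmooth.congr fun x hx => hmaster x hx
end
end
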